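/- arXiv:1002.4607 — 12 statements merged into one kernel-verified Lean document; each statement's English description precedes it below -/
import Mathlib

section
/- The formula w_μ(i) = |{1 ≤ j < i : μ_j < μ_i}| + |{i ≤ j ≤ n : μ_j ≤ μ_i}| defines a permutation of {1,...,n} for any μ ∈ ℤ_{≥0}^n. -/
open Finset

/-- The formula `w_μ(i) = |{j < i : μ_j < μ_i}| + |{j ≥ i : μ_j ≤ μ_i}|` defines a
permutation of `{1,…,n}`: there is a permutation `σ` of `Fin n` whose one-indexed
values agree with the formula. -/
theorem stmt1 (n : ℕ) (μ : Fin n → ℕ) :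
    ∃ σ : Equiv.Perm (Fin n), ∀ i : Fin n,
      (σ i : ℕ) + 1 = (univ.filter (fun j => j < i ∧ μ j < μ i)).card
        + (univ.filter (fun j => i ≤ j ∧ μ j ≤ μ i)).card := by
  classical
  set r : Fin n → Fin n → Prop := fun x y => μ x < μ y ∨ (μ x = μ y ∧ y < x) with hr
  have hirr : ∀ x, ¬ r x x := by
    intro x
    simp [hr]
  have htri : ∀ x y : Fin n, x ≠ y → r x y ∨ r y x := by
    intro x y hxy
    rcases lt_trichotomy (μ x) (μ y) with h | h | h
    · exact Or.inl (Or.inl h)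
    · rcases lt_or_gt_of_ne hxy with hlt | hlt
      · exact Or.inr (Or.inr ⟨h.symm, hlt⟩)
      · exact Or.inl (Or.inr ⟨h, hlt⟩)
    · exact Or.inr (Or.inl h)
  have hcomp : ∀ x y z : Fin n, r x y → r y z → r x z := by
    intro x y z hxy hyz
    rcases hxy with h1 | ⟨h1, h1'⟩ <;> rcases hyz with h2 | ⟨h2, h2'⟩
    · exact Or.inl (h1.trans h2)
    · exact Or.inl (h2 ▸ h1)
    · exact Or.inl (h1 ▸ h2)
    · exact Or.inr ⟨h1.trans h2, h2'.trans h1'⟩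
  set c : Fin n → ℕ := fun i => (univ.filter (fun j => r j i)).card with hc
  have hclt : ∀ i, c i < n := by
    intro i
    have : (univ.filter (fun j => r j i)) ⊂ univ :=
      Finset.filter_ssubset.mpr ⟨i, mem_univ i, hirr i⟩
    simpa using Finset.card_lt_card this
  have hmono : ∀ x y : Fin n, r x y → c x < c y := by
    intro x y hxy
    apply Finset.card_lt_card
    rw [Finset.ssubset_iff_of_subset]
    · exact ⟨x, by simpa using hxy, by simpa using hirr x⟩
    · intro j hj
      simp only [mem_filter, mem_univ, true_and] at hj ⊢
      exact hcomp j x y hj hxy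
  have hinj : Function.Injective (fun i : Fin n => (⟨c i, hclt i⟩ : Fin n)) := by
    intro a b hab
    by_contra hne
    have hcab : c a = c b := by simpa [Fin.ext_iff] using hab
    rcases htri a b hne with h | h
    · exact absurd hcab (hmono a b h).ne
    · exact absurd hcab.symm (hmono b a h).ne
  have hbij := (Finite.injective_iff_bijective).mp hinj
  refine ⟨Equiv.ofBijective _ hbij, ?_⟩
  intro i
  have key : (univ.filter (fun j => j < i ∧ μ j < μ i)).card
      + (univ.filter (fun j => i ≤ j ∧ μ j ≤ μ i)).card = c i + 1 := by
    have hdisj : Disjoint (univ.filter (fun j => j < i ∧ μ j < μ i))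
        (univ.filter (fun j => i ≤ j ∧ μ j ≤ μ i)) := by
      rw [Finset.disjoint_left]
      intro j hj hj'
      simp only [mem_filter, mem_univ, true_and] at hj hj'
      exact absurd hj.1 (not_lt_of_ge hj'.1)
    rw [← Finset.card_union_of_disjoint hdisj, ← Finset.filter_or]
    have hset : (univ.filter (fun j => (j < i ∧ μ j < μ i) ∨ (i ≤ j ∧ μ j ≤ μ i)))
        = insert i (univ.filter (fun j => r j i)) := by
      ext j
      simp only [mem_insert, mem_filter, mem_univ, true_and, hr]
      constructor
      · rintro (⟨hji, hμ⟩ | ⟨hij, hμ⟩)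
        · exact Or.inr (Or.inl hμ)
        · rcases eq_or_lt_of_le hij with heq | hlt
          · exact Or.inl heq.symm
          · rcases lt_or_eq_of_le hμ with h | h
            · exact Or.inr (Or.inl h)
            · exact Or.inr (Or.inr ⟨h, hlt⟩)
      · rintro (heq | hμ | ⟨hμ, hij⟩)
        · subst heq; exact Or.inr ⟨le_refl _, le_refl _⟩
        · rcases lt_or_ge j i with hji | hij
          · exact Or.inl ⟨hji, hμ⟩
          · exact Or.inr ⟨hij, le_of_lt hμ⟩
        · exact Or.inr ⟨le_of_lt hij, le_of_eq hμ⟩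
    rw [hset, Finset.card_insert_of_notMem (by simpa using hirr i)]
  rw [key]
  rfl
end

section
/- Let z_1,...,z_n be indeterminates and c a parameter. Then ∑_{w ∈ S_n} ∏_{(i,j) with i<j, w(i)>w(j)} (1 + c/(z_i - z_j)) · ∏_{(i,j) with i<j, w(i)<w(j)} (1 - c/(z_i - z_j)) = n!, as an identity of rational functions in z_1,...,z_n, c. -/
open Finset

section Aux

open Polynomial

variable {K : Type*} [Field K]

private lemma coeff_basis_pred {ι : Type*} [DecidableEq ι] {s : Finset ι} {v : ι → K} {i : ι}
    (hi : i ∈ s) :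
    (Lagrange.basis s v i).coeff (#s - 1) = Lagrange.nodalWeight s v i := by
  have hb : Lagrange.basis s v i
      = C (Lagrange.nodalWeight s v i) * Lagrange.nodal (s.erase i) v := by
    simp_rw [Lagrange.basis, Lagrange.basisDivisor, Lagrange.nodalWeight, prod_mul_distrib,
      map_prod, Lagrange.nodal]
  rw [hb, coeff_C_mul]
  have hdeg : (Lagrange.nodal (s.erase i) v).natDegree = #s - 1 := by
    rw [Lagrange.natDegree_nodal, card_erase_of_mem hi]
  rw [← hdeg, (Lagrange.nodal_monic).coeff_natDegree, mul_one]

/-- The key Lagrange-interpolation identity: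
`∑_{p∈s} ∏_{q∈s, q≠p} (1 - c/(v p - v q)) = #s`. -/
private lemma dagger {ι : Type*} [DecidableEq ι] (s : Finset ι) (v : ι → K)
    (hv : Set.InjOn v s) (c : K) :
    ∑ p ∈ s, ∏ q ∈ s.erase p, (1 - c / (v p - v q)) = #s := by
  rcases eq_or_ne c 0 with rfl | hc
  · simp
  rcases s.eq_empty_or_nonempty with rfl | hs
  · simp
  set n := #s with hn
  have hn1 : 1 ≤ n := hs.card_pos
  set g : K[X] := Lagrange.nodal s v with hg
  have hgm : g.Monic := Lagrange.nodal_monic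
  have hcomp : g.comp (X - C c) = ∏ q ∈ s, (X - C (c + v q)) := by
    rw [hg, Lagrange.nodal, Polynomial.prod_comp]
    refine Finset.prod_congr rfl fun q _ => ?_
    rw [sub_comp, X_comp, C_comp, C_add, sub_sub]
  have hcm : (g.comp (X - C c)).Monic := hgm.comp_X_sub_C c
  have hdegg : g.natDegree = n := Lagrange.natDegree_nodal
  have hdegc : (g.comp (X - C c)).natDegree = n := by
    rw [natDegree_comp, hdegg, natDegree_X_sub_C, mul_one]
  set h : K[X] := g.comp (X - C c) - g with hh
  have hdlt : h.degree < (n : WithBot ℕ) := by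
    have h1 : (g.comp (X - C c)).degree = g.degree := by
      rw [degree_eq_natDegree hcm.ne_zero, degree_eq_natDegree hgm.ne_zero, hdegc, hdegg]
    have := degree_sub_lt h1 hcm.ne_zero (by rw [hcm.leadingCoeff, hgm.leadingCoeff])
    rwa [degree_eq_natDegree hcm.ne_zero, hdegc] at this
  have heval : ∀ p ∈ s, h.eval (v p) = g.eval (v p - c) := by
    intro p hp
    rw [hh]
    simp [eval_comp, Lagrange.eval_nodal_at_node hp]
    exact Lagrange.eval_nodal_at_node hp
  have hinterp : h = Lagrange.interpolate s v fun i => h.eval (v i) :=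
    Lagrange.eq_interpolate hv hdlt
  have hL : h.coeff (n - 1) = -(n : K) * c := by
    rw [hh, coeff_sub, hcomp, hg, Lagrange.nodal,
      prod_X_sub_C_coeff_card_pred s (fun q => c + v q) hs.card_pos,
      prod_X_sub_C_coeff_card_pred s v hs.card_pos]
    simp only [Finset.sum_add_distrib, Finset.sum_const, nsmul_eq_mul, ← hn]
    ring
  have hR : h.coeff (n - 1)
      = ∑ p ∈ s, g.eval (v p - c) * Lagrange.nodalWeight s v p := by
    conv_lhs => rw [hinterp]
    rw [Lagrange.interpolate_apply, finset_sum_coeff]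
    refine Finset.sum_congr rfl fun p hp => ?_
    rw [coeff_C_mul, coeff_basis_pred hp, heval p hp]
  have key : ∑ p ∈ s, g.eval (v p - c) * Lagrange.nodalWeight s v p = -(n : K) * c := by
    rw [← hR, hL]
  have hprod : ∀ p ∈ s, ∏ q ∈ s.erase p, (1 - c / (v p - v q))
      = g.eval (v p - c) * Lagrange.nodalWeight s v p / (-c) := by
    intro p hp
    have hnum : ∏ q ∈ s.erase p, (v p - c - v q) = g.eval (v p - c) / (-c) := by
      have : g.eval (v p - c) = (v p - c - v p) * ∏ q ∈ s.erase p, (v p - c - v q) := by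
        rw [hg, Lagrange.eval_nodal, ← Finset.mul_prod_erase _ _ hp]
      rw [this]
      field_simp
      ring
    have hfac : ∀ q ∈ s.erase p, (1 - c / (v p - v q)) = (v p - c - v q) * (v p - v q)⁻¹ := by
      intro q hq
      have hne : v p - v q ≠ 0 := by
        rw [sub_ne_zero]
        exact fun e => (Finset.mem_erase.mp hq).1 (hv (Finset.mem_of_mem_erase hq) hp e.symm)
      rw [one_sub_div hne, div_eq_mul_inv, sub_right_comm]
    rw [Finset.prod_congr rfl hfac, prod_mul_distrib, hnum,
      Lagrange.nodalWeight, div_mul_eq_mul_div]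
  rw [Finset.sum_congr rfl hprod, ← Finset.sum_div, ← Finset.sum_congr rfl (fun p hp => rfl), key]
  rw [neg_mul, neg_div_neg_eq, mul_div_assoc, div_self hc, mul_one]

/-- The main identity for an injective family of points, by induction using
`Equiv.Perm.decomposeFin`. -/
private lemma core (c : K) : ∀ n (y : Fin n → K), Function.Injective y →
    ∑ σ : Equiv.Perm (Fin n), ∏ a : Fin n, ∏ b ∈ Finset.Ioi a,
      (1 - c / (y (σ a) - y (σ b))) = (n.factorial : K) := by
  intro n
  induction n with
  | zero => intro y _; simp
  | succ n IH =>
    intro y hy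
    rw [← Equiv.sum_comp (Equiv.Perm.decomposeFin.symm)
      (fun σ => ∏ a : Fin (n+1), ∏ b ∈ Finset.Ioi a, (1 - c / (y (σ a) - y (σ b)))),
      Fintype.sum_prod_type]
    have hσ0 : ∀ (p : Fin (n+1)) (e : Equiv.Perm (Fin n)),
        Equiv.Perm.decomposeFin.symm (p, e) 0 = p :=
      fun p e => Equiv.Perm.decomposeFin_symm_apply_zero p e
    have hσs : ∀ (p : Fin (n+1)) (e : Equiv.Perm (Fin n)) (i : Fin n),
        Equiv.Perm.decomposeFin.symm (p, e) i.succ = Equiv.swap 0 p (e i).succ :=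
      fun p e i => Equiv.Perm.decomposeFin_symm_apply_succ e p i
    have main : ∀ p : Fin (n+1),
        ∑ e : Equiv.Perm (Fin n),
          ∏ a : Fin (n+1), ∏ b ∈ Finset.Ioi a,
            (1 - c / (y (Equiv.Perm.decomposeFin.symm (p, e) a)
              - y (Equiv.Perm.decomposeFin.symm (p, e) b)))
        = (∏ q ∈ univ.erase p, (1 - c / (y p - y q))) * (n.factorial : K) := by
      intro p
      set gp : Fin n → Fin (n+1) := fun b => Equiv.swap 0 p b.succ with hgp
      have hgpinj : Function.Injective gp := fun a b hab => by
        simpa using (Equiv.injective _ hab)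
      have split : ∀ e : Equiv.Perm (Fin n),
          ∏ a : Fin (n+1), ∏ b ∈ Finset.Ioi a,
            (1 - c / (y (Equiv.Perm.decomposeFin.symm (p, e) a)
              - y (Equiv.Perm.decomposeFin.symm (p, e) b)))
          = (∏ b : Fin n, (1 - c / (y p - y (gp b)))) *
            ∏ a : Fin n, ∏ b ∈ Finset.Ioi a,
              (1 - c / (y (gp (e a)) - y (gp (e b)))) := by
        intro e
        rw [Fin.prod_univ_succ]
        congr 1
        · rw [Fin.Ioi_zero_eq_map, Finset.prod_map]
          simp only [Fin.succEmb, Function.Embedding.coeFn_mk, hσ0, hσs]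
          exact Equiv.prod_comp e (fun b => (1 - c / (y p - y (gp b))))
        · refine Finset.prod_congr rfl fun a _ => ?_
          rw [Fin.Ioi_succ, Finset.prod_map]
          refine Finset.prod_congr rfl fun b _ => ?_
          simp only [Fin.succEmb, Function.Embedding.coeFn_mk, hσs]
          rfl
      simp only [split]
      rw [← Finset.mul_sum]
      have hIH : ∑ e : Equiv.Perm (Fin n), ∏ a : Fin n, ∏ b ∈ Finset.Ioi a,
          (1 - c / (y (gp (e a)) - y (gp (e b)))) = (n.factorial : K) :=
        IH (y ∘ gp) (hy.comp hgpinj)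
      rw [hIH]
      congr 1
      have himg : (univ : Finset (Fin n)).image gp = univ.erase p := by
        apply Finset.eq_of_subset_of_card_le
        · intro q hq
          rcases Finset.mem_image.mp hq with ⟨b, _, rfl⟩
          refine Finset.mem_erase.mpr ⟨?_, Finset.mem_univ _⟩
          intro h
          have h0 : gp b = Equiv.swap 0 p 0 := by rw [Equiv.swap_apply_left]; exact h
          exact Fin.succ_ne_zero b (Equiv.injective _ h0)
        · rw [Finset.card_erase_of_mem (Finset.mem_univ p),
            Finset.card_image_of_injective _ hgpinj]
          simp
      rw [← himg, Finset.prod_image (fun a _ b _ h => hgpinj h)]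
    simp only [main]
    rw [← Finset.sum_mul]
    have hd := dagger (univ : Finset (Fin (n+1))) y (hy.injOn) c
    rw [hd]
    simp [Nat.factorial_succ, mul_comm]

private lemma pair_prod_eq {n : ℕ} (f : Fin n → Fin n → K) :
    ∏ q ∈ univ.filter (fun q : Fin n × Fin n => q.1 < q.2), f q.1 q.2
      = ∏ a : Fin n, ∏ b ∈ Finset.Ioi a, f a b := by
  rw [Finset.prod_sigma']
  refine Finset.prod_nbij' (fun p => ⟨p.1, p.2⟩) (fun x => (x.1, x.2)) ?_ ?_ ?_ ?_ ?_
  · intro p hp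
    simp only [Finset.mem_filter] at hp
    simp [Finset.mem_sigma, Finset.mem_Ioi, hp.2]
  · intro x hx
    simp only [Finset.mem_sigma, Finset.mem_univ, Finset.mem_Ioi] at hx
    simp [hx.2]
  · intro p _; rfl
  · intro x _; rfl
  · intro p _; rfl

private lemma reindex_term {n : ℕ} (z : Fin n → K) (c : K) (w : Equiv.Perm (Fin n)) :
    (∏ p ∈ univ.filter (fun p : Fin n × Fin n => p.1 < p.2 ∧ w p.2 < w p.1),
        (1 + c / (z p.1 - z p.2))) *
      (∏ p ∈ univ.filter (fun p : Fin n × Fin n => p.1 < p.2 ∧ w p.1 < w p.2),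
        (1 - c / (z p.1 - z p.2)))
    = ∏ q ∈ univ.filter (fun q : Fin n × Fin n => q.1 < q.2),
        (1 - c / (z (w⁻¹ q.1) - z (w⁻¹ q.2))) := by
  have h2 : ∏ q ∈ univ.filter (fun q : Fin n × Fin n => q.1 < q.2),
        (1 - c / (z (w⁻¹ q.1) - z (w⁻¹ q.2)))
      = ∏ p ∈ univ.filter (fun p : Fin n × Fin n => w p.1 < w p.2),
        (1 - c / (z p.1 - z p.2)) := by
    refine Finset.prod_nbij' (fun q => (w⁻¹ q.1, w⁻¹ q.2)) (fun p => (w p.1, w p.2)) ?_ ?_ ?_ ?_ ?_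
    · intro q hq
      simp only [Finset.mem_filter, Finset.mem_univ, true_and] at hq ⊢
      simpa using hq
    · intro p hp
      simp only [Finset.mem_filter, Finset.mem_univ, true_and] at hp ⊢
      simpa using hp
    · intro q _; simp
    · intro p _; simp
    · intro q _; rfl
  rw [h2]
  have hunion : univ.filter (fun p : Fin n × Fin n => w p.1 < w p.2)
      = (univ.filter (fun p : Fin n × Fin n => p.1 < p.2 ∧ w p.2 < w p.1)).image Prod.swap
        ∪ univ.filter (fun p : Fin n × Fin n => p.1 < p.2 ∧ w p.1 < w p.2) := by
    ext p
    simp only [Finset.mem_union, Finset.mem_filter, Finset.mem_univ, true_and,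
      Finset.mem_image]
    constructor
    · intro hp
      rcases lt_trichotomy p.1 p.2 with h | h | h
      · exact Or.inr ⟨h, hp⟩
      · exact absurd hp (by simp [h, lt_irrefl])
      · exact Or.inl ⟨(p.2, p.1), ⟨h, hp⟩, rfl⟩
    · rintro (⟨q, ⟨h1, h2⟩, rfl⟩ | ⟨h1, h2⟩)
      · exact h2
      · exact h2
  rw [hunion, Finset.prod_union, Finset.prod_image]
  · congr 1
    refine Finset.prod_congr rfl fun p hp => ?_
    simp only [Prod.fst_swap, Prod.snd_swap]
    rw [show z p.2 - z p.1 = -(z p.1 - z p.2) by ring, div_neg, sub_neg_eq_add]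
  · intro a _ b _ h
    exact Prod.swap_injective h
  · rw [Finset.disjoint_left]
    rintro p hp hp'
    simp only [Finset.mem_image, Finset.mem_filter, Finset.mem_univ, true_and] at hp hp'
    rcases hp with ⟨q, ⟨h1, _⟩, rfl⟩
    exact absurd hp'.1 (by simp [asymm h1, not_lt.mpr (le_of_lt h1)])

end Aux

/-- The field of rational functions in `z_1,…,z_n` and `c` over `ℚ`. -/
noncomputable abbrev Kn (n : ℕ) : Type :=
  FractionRing (MvPolynomial (Fin n ⊕ Unit) ℚ)

/-- The variable `z i` as a rational function. -/
noncomputable def zvar (n : ℕ) (i : Fin n) : Kn n :=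
  algebraMap (MvPolynomial (Fin n ⊕ Unit) ℚ) (Kn n) (MvPolynomial.X (Sum.inl i))

/-- The parameter `c` as a rational function. -/
noncomputable def cvar (n : ℕ) : Kn n :=
  algebraMap (MvPolynomial (Fin n ⊕ Unit) ℚ) (Kn n) (MvPolynomial.X (Sum.inr ()))

/-- `∑_{w ∈ S_n} ∏_{i<j, w(i)>w(j)} (1 + c/(z_i - z_j)) ∏_{i<j, w(i)<w(j)} (1 - c/(z_i - z_j)) = n!`
as an identity of rational functions in `z_1,…,z_n,c`. -/
theorem stmt3 (n : ℕ) :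
    ∑ w : Equiv.Perm (Fin n),
      (∏ p ∈ univ.filter (fun p : Fin n × Fin n => p.1 < p.2 ∧ w p.2 < w p.1),
        (1 + cvar n / (zvar n p.1 - zvar n p.2))) *
      (∏ p ∈ univ.filter (fun p : Fin n × Fin n => p.1 < p.2 ∧ w p.1 < w p.2),
        (1 - cvar n / (zvar n p.1 - zvar n p.2))) = (n.factorial : Kn n) := by
  have hz : Function.Injective (zvar n) := by
    intro i j h
    have h1 := IsFractionRing.injective (MvPolynomial (Fin n ⊕ Unit) ℚ) (Kn n) h
    have h2 := MvPolynomial.X_injective h1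
    exact Sum.inl_injective h2
  simp only [reindex_term (zvar n) (cvar n)]
  have hswap : ∑ w : Equiv.Perm (Fin n),
      ∏ q ∈ univ.filter (fun q : Fin n × Fin n => q.1 < q.2),
        (1 - cvar n / (zvar n (w⁻¹ q.1) - zvar n (w⁻¹ q.2)))
      = ∑ σ : Equiv.Perm (Fin n),
      ∏ q ∈ univ.filter (fun q : Fin n × Fin n => q.1 < q.2),
        (1 - cvar n / (zvar n (σ q.1) - zvar n (σ q.2))) :=
    Fintype.sum_equiv (Equiv.inv (Equiv.Perm (Fin n))) _ _ (fun _ => rfl)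
  rw [hswap]
  have hconv : ∀ σ : Equiv.Perm (Fin n),
      ∏ q ∈ univ.filter (fun q : Fin n × Fin n => q.1 < q.2),
        (1 - cvar n / (zvar n (σ q.1) - zvar n (σ q.2)))
      = ∏ a : Fin n, ∏ b ∈ Finset.Ioi a, (1 - cvar n / (zvar n (σ a) - zvar n (σ b))) :=
    fun σ => pair_prod_eq (fun a b => (1 - cvar n / (zvar n (σ a) - zvar n (σ b))))
  simp only [hconv]
  exact core (cvar n) n (zvar n) hz
end

section
/- The rational function F(z) = ∑_{w ∈ S_n} ∏_{(i,j) ∈ Inv(w)} (1 + c/(z_i - z_j)) · ∏_{(i,j) ∈ R⁺ \ Inv(w)} (1 - c/(z_i - z_j)) is symmetric in z_1,...,z_n, i.e., invariant under every simple transposition s_k acting on the variables. -/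
open Finset

/-- The function
`F(z) = ∑_{w ∈ S_n} ∏_{(i,j) ∈ Inv(w)} (1 + c/(z_i - z_j)) ∏_{(i,j) ∈ R⁺∖Inv(w)} (1 - c/(z_i - z_j))`. -/
noncomputable def Ffun {n : ℕ} {F : Type*} [Field F] (c : F) (z : Fin n → F) : F :=
  ∑ w : Equiv.Perm (Fin n),
    (∏ p ∈ univ.filter (fun p : Fin n × Fin n => p.1 < p.2 ∧ w p.2 < w p.1),
      (1 + c / (z p.1 - z p.2))) *
    (∏ p ∈ univ.filter (fun p : Fin n × Fin n => p.1 < p.2 ∧ w p.1 < w p.2),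
      (1 - c / (z p.1 - z p.2)))

/-- `F(z)` is symmetric in `z_1,…,z_n`: it is invariant under every simple transposition
`s_k = (k, k+1)` acting on the variables. -/
theorem stmt4 (n : ℕ) (F : Type*) [Field F] (c : F) (z : Fin n → F)
    (hz : Function.Injective z) (k l : Fin n) (hkl : (k : ℕ) + 1 = (l : ℕ)) :
    Ffun c (z ∘ (Equiv.swap k l)) = Ffun c z := by
  classical
  set σ : Equiv.Perm (Fin n) := Equiv.swap k l with hσdef
  have hkne : k ≠ l := by intro h; subst h; omega
  -- only the pair (k,l) has its order flipped by σ
  have hflip : ∀ p : Fin n × Fin n, p.1 < p.2 → ¬ (σ p.1 < σ p.2) → p.1 = k ∧ p.2 = l := by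
    intro p h12 h
    rw [hσdef] at h
    simp only [Equiv.swap_apply_def] at h
    clear hz hσdef
    split_ifs at h <;>
    first
      | exact ⟨‹_›, ‹_›⟩
      | (exfalso
         simp_all only [Fin.lt_def, Fin.ext_iff, not_lt, ne_eq]
         try omega)
  -- combine the two products into one
  have hterm : ∀ (w : Equiv.Perm (Fin n)) (y : Fin n → F),
      (∏ p ∈ univ.filter (fun p : Fin n × Fin n => p.1 < p.2 ∧ w p.2 < w p.1),
        (1 + c / (y p.1 - y p.2))) *
      (∏ p ∈ univ.filter (fun p : Fin n × Fin n => p.1 < p.2 ∧ w p.1 < w p.2),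
        (1 - c / (y p.1 - y p.2)))
      = ∏ p ∈ univ.filter (fun p : Fin n × Fin n => p.1 < p.2),
          (if w p.2 < w p.1 then 1 + c / (y p.1 - y p.2) else 1 - c / (y p.1 - y p.2)) := by
    intro w y
    rw [Finset.prod_ite, Finset.filter_filter, Finset.filter_filter]
    congr 2
    ext p
    simp only [Finset.mem_filter, Finset.mem_univ, true_and, not_lt]
    refine and_congr_right fun h12 => ⟨fun h => h.le, fun h => lt_of_le_of_ne h ?_⟩
    exact w.injective.ne h12.ne
  rw [Ffun, Ffun]
  refine Fintype.sum_bijective (fun w => w * σ) (Group.mulRight_bijective σ) _ _ fun w => ?_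
  rw [hterm, hterm]
  refine Finset.prod_nbij'
    (fun p => if σ p.1 < σ p.2 then (σ p.1, σ p.2) else (σ p.2, σ p.1))
    (fun p => if σ p.1 < σ p.2 then (σ p.1, σ p.2) else (σ p.2, σ p.1))
    ?_ ?_ ?_ ?_ ?_
  · intro p hp
    simp only [Finset.mem_filter, Finset.mem_univ, true_and] at hp ⊢
    split_ifs with hc
    · exact hc
    · exact lt_of_le_of_ne (not_lt.mp hc) (σ.injective.ne hp.ne')
  · intro p hp
    simp only [Finset.mem_filter, Finset.mem_univ, true_and] at hp ⊢
    split_ifs with hc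
    · exact hc
    · exact lt_of_le_of_ne (not_lt.mp hc) (σ.injective.ne hp.ne')
  · intro p hp
    simp only [Finset.mem_filter, Finset.mem_univ, true_and] at hp
    by_cases hc : σ p.1 < σ p.2
    · simp only [hc, ↓reduceIte]
      simp [hc, hσdef, Equiv.swap_apply_self, hp]
    · simp only [hc, ↓reduceIte]
      simp [hc, hσdef, Equiv.swap_apply_self, not_lt.mpr hp.le]
  · intro p hp
    simp only [Finset.mem_filter, Finset.mem_univ, true_and] at hp
    by_cases hc : σ p.1 < σ p.2
    · simp only [hc, ↓reduceIte]
      simp [hc, hσdef, Equiv.swap_apply_self, hp]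
    · simp only [hc, ↓reduceIte]
      simp [hc, hσdef, Equiv.swap_apply_self, not_lt.mpr hp.le]
  · intro p hp
    simp only [Finset.mem_filter, Finset.mem_univ, true_and] at hp
    by_cases hc : σ p.1 < σ p.2
    · simp only [hc, ↓reduceIte]
      simp only [hc, if_true, Equiv.Perm.mul_apply, hσdef, Equiv.swap_apply_self,
        Function.comp_apply]
    · obtain ⟨h1, h2⟩ := hflip p hp hc
      have hσk : σ k = l := Equiv.swap_apply_left k l
      have hσl : σ l = k := Equiv.swap_apply_right k l
      have hkllt : k < l := by rw [Fin.lt_def]; omega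
      simp only [hc, if_false, h1, h2, hσk, hσl, Equiv.Perm.mul_apply, Function.comp_apply]
      rw [if_neg (not_lt.mpr hkllt.le)]
      simp only [hσk, hσl]
      have hne : w l ≠ w k := w.injective.ne (Ne.symm hkne)
      have hflipval : (1 : F) + c / (z l - z k) = 1 - c / (z k - z l) := by
        rw [show z l - z k = -(z k - z l) by ring, div_neg]; ring
      have hflipval' : (1 : F) - c / (z l - z k) = 1 + c / (z k - z l) := by
        rw [show z l - z k = -(z k - z l) by ring, div_neg]; ring
      rcases lt_or_gt_of_ne hne with h | h
      · rw [if_pos h, if_neg (not_lt.mpr h.le), hflipval]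
      · rw [if_neg (not_lt.mpr h.le), if_pos h, hflipval']
end

section
/- Let λ and χ be partitions of n. Then λ ≥ χ in dominance order if and only if for every integer j, the number of boxes b of the Young diagram of λ with content ct(b) ≥ j is at least the number of boxes b' of the Young diagram of χ with ct(b') ≥ j. -/
open Finset

private lemma cast_sub_max' (a b : ℕ) : ((a - b : ℕ) : ℤ) = max ((a:ℤ) - b) 0 := by omega

private lemma prefix_sum_le' (n m : ℕ) (hm : m ≤ n) (t : ℕ → ℤ) :
    ∑ i ∈ range m, t i ≤ ∑ i ∈ range n, max (t i) 0 := by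
  calc ∑ i ∈ range m, t i ≤ ∑ i ∈ range m, max (t i) 0 :=
        Finset.sum_le_sum fun i _ => le_max_left _ _
    _ ≤ ∑ i ∈ range n, max (t i) 0 := by
        apply Finset.sum_le_sum_of_subset_of_nonneg (Finset.range_subset_range.2 hm)
        intro i _ _; exact le_max_right _ _

private lemma exists_prefix' (n : ℕ) (t : ℕ → ℤ) (ht : Antitone t) :
    ∃ m, m ≤ n ∧ ∑ i ∈ range n, max (t i) 0 = ∑ i ∈ range m, t i := by
  by_cases h : ∃ i, i < n ∧ t i ≤ 0
  · obtain ⟨hmn, hm0⟩ := Nat.find_spec h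
    set m := Nat.find h with hmdef
    refine ⟨m, hmn.le, ?_⟩
    rw [← Finset.sum_range_add_sum_Ico (fun i => max (t i) 0) hmn.le]
    have h1 : ∑ i ∈ Ico m n, max (t i) 0 = 0 := by
      apply Finset.sum_eq_zero
      intro i hi
      rw [mem_Ico] at hi
      exact max_eq_right (le_trans (ht hi.1) hm0)
    have h2 : ∑ i ∈ range m, max (t i) 0 = ∑ i ∈ range m, t i := by
      apply Finset.sum_congr rfl
      intro i hi
      rw [mem_range] at hi
      have := Nat.find_min h hi
      push_neg at this
      exact max_eq_left (this (lt_of_lt_of_le hi hmn.le)).le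
    have h3 : ∑ i ∈ Ico m n, t i ≤ 0 := by
      apply Finset.sum_nonpos
      intro i hi
      rw [mem_Ico] at hi
      exact le_trans (ht hi.1) hm0
    rw [h1, h2]; ring
  · push_neg at h
    refine ⟨n, le_refl n, Finset.sum_congr rfl fun i hi => ?_⟩
    rw [mem_range] at hi
    exact max_eq_left (h i hi).le

private lemma ncard_boxes' (n : ℕ) (l : ℕ → ℕ) (hl0 : ∀ i, n ≤ i → l i = 0) (j : ℤ) :
    {b : ℕ × ℕ | b.2 < l b.1 ∧ j ≤ (b.2 : ℤ) - b.1}.ncard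
      = ∑ i ∈ range n, (l i - (j + i).toNat) := by
  classical
  have hset : {b : ℕ × ℕ | b.2 < l b.1 ∧ j ≤ (b.2 : ℤ) - b.1} =
      ↑((range n).biUnion fun i =>
        (Finset.Ico ((j + i).toNat) (l i)).map ⟨Prod.mk i, Prod.mk_right_injective i⟩) := by
    ext ⟨a, b⟩
    simp only [Set.mem_setOf_eq, Finset.coe_biUnion, Set.mem_iUnion, Finset.mem_coe,
      Finset.mem_map, Finset.mem_Ico, Finset.mem_range, Function.Embedding.coeFn_mk,
      Prod.mk.injEq]
    constructor
    · rintro ⟨h1, h2⟩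
      have ha : a < n := by
        by_contra hc
        rw [hl0 a (le_of_not_gt hc)] at h1; omega
      exact ⟨a, ha, b, ⟨Int.toNat_le.2 (by omega), h1⟩, rfl, rfl⟩
    · rintro ⟨i, hi, k, ⟨hk1, hk2⟩, rfl, rfl⟩
      have := Int.toNat_le.1 hk1
      exact ⟨hk2, by omega⟩
  rw [hset, Set.ncard_coe_finset, Finset.card_biUnion]
  · apply Finset.sum_congr rfl
    intro i _
    rw [Finset.card_map, Nat.card_Ico]
  · intro i _ i' _ hii'
    rw [Function.onFun, Finset.disjoint_left]
    rintro ⟨a, b⟩ hab hab'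
    simp only [Finset.mem_map, Function.Embedding.coeFn_mk, Prod.mk.injEq] at hab hab'
    obtain ⟨k, -, rfl, rfl⟩ := hab
    obtain ⟨k', -, h1, -⟩ := hab'
    exact hii' h1.symm

private lemma sum_eq_n' (n : ℕ) (l : ℕ → ℕ) (hl0 : ∀ i, n ≤ i → l i = 0)
    (hln : ∑ i ∈ range n, l i = n) : ∀ m, n ≤ m → ∑ k ∈ range m, l k = n := by
  intro m hm
  rw [← Finset.sum_range_add_sum_Ico _ hm, hln]
  have : ∑ i ∈ Ico n m, l i = 0 :=
    Finset.sum_eq_zero fun i hi => hl0 i (mem_Ico.1 hi).1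
  omega

/-- For partitions `λ, χ` of `n` (encoded as antitone functions `ℕ → ℕ`, rows indexed
from `0`, vanishing from row `n` on, with total size `n`), dominance order `λ ≥ χ` holds
if and only if for every integer `j` the number of boxes of `λ` of content `≥ j` is at
least the number of boxes of `χ` of content `≥ j`.  Boxes of `λ` are pairs `(i,k)` with
`k < λ i`, and the content of `(i,k)` is `k - i`. -/
theorem stmt6 (n : ℕ) (l x : ℕ → ℕ)
    (hl : Antitone l) (hx : Antitone x)
    (hl0 : ∀ i, n ≤ i → l i = 0) (hx0 : ∀ i, n ≤ i → x i = 0)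
    (hln : ∑ i ∈ range n, l i = n) (hxn : ∑ i ∈ range n, x i = n) :
    (∀ i : ℕ, ∑ k ∈ range i, x k ≤ ∑ k ∈ range i, l k) ↔
    (∀ j : ℤ, {b : ℕ × ℕ | b.2 < x b.1 ∧ j ≤ (b.2 : ℤ) - b.1}.ncard ≤
      {b : ℕ × ℕ | b.2 < l b.1 ∧ j ≤ (b.2 : ℤ) - b.1}.ncard) := by
  have key : ∀ (f : ℕ → ℕ) (j : ℤ),
      (∑ i ∈ range n, ((f i - (j + i).toNat : ℕ) : ℤ))
        = ∑ i ∈ range n, max ((f i : ℤ) - max (j + i) 0) 0 := by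
    intro f j
    apply Finset.sum_congr rfl
    intro i _
    rw [cast_sub_max', Int.toNat_eq_max]
  constructor
  · intro hdom j
    rw [ncard_boxes' n x hx0 j, ncard_boxes' n l hl0 j]
    have hZ : (∑ i ∈ range n, ((x i - (j + i).toNat : ℕ) : ℤ))
        ≤ ∑ i ∈ range n, ((l i - (j + i).toNat : ℕ) : ℤ) := by
      rw [key x j, key l j]
      set tx : ℕ → ℤ := fun i => (x i : ℤ) - max (j + i) 0 with htx
      have htanti : Antitone tx := by
        intro a b hab
        simp only [htx]
        have h1 : (x b : ℤ) ≤ x a := by exact_mod_cast hx hab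
        have h2 : max (j + (a:ℤ)) 0 ≤ max (j + (b:ℤ)) 0 := by
          apply max_le_max _ le_rfl
          omega
        omega
      obtain ⟨m, hmn, hms⟩ := exists_prefix' n tx htanti
      rw [hms]
      calc ∑ i ∈ range m, tx i
          = ∑ i ∈ range m, (x i : ℤ) - ∑ i ∈ range m, max (j + (i:ℤ)) 0 := by
            rw [← Finset.sum_sub_distrib]
        _ ≤ ∑ i ∈ range m, (l i : ℤ) - ∑ i ∈ range m, max (j + (i:ℤ)) 0 := by
            have : (∑ i ∈ range m, x i : ℤ) ≤ (∑ i ∈ range m, l i : ℤ) := by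
              exact_mod_cast hdom m
            push_cast at this
            omega
        _ = ∑ i ∈ range m, ((l i : ℤ) - max (j + (i:ℤ)) 0) := by
            rw [← Finset.sum_sub_distrib]
        _ ≤ ∑ i ∈ range n, max ((l i : ℤ) - max (j + (i:ℤ)) 0) 0 :=
            prefix_sum_le' n m hmn _
    exact_mod_cast hZ
  · intro hN m
    by_contra hlt
    push_neg at hlt
    -- m ≤ n
    have hmn : m ≤ n := by
      by_contra hc
      push_neg at hc
      rw [sum_eq_n' n l hl0 hln m hc.le, sum_eq_n' n x hx0 hxn m hc.le] at hlt
      omega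
    -- m ≥ 1
    obtain _ | m' := m
    · simp at hlt
    have hm'n : m' < n := hmn
    -- l m' ≥ 1
    have hlm' : 1 ≤ l m' := by
      by_contra hc
      push_neg at hc
      have hlm0 : l m' = 0 := by omega
      have hfull : ∑ k ∈ range (m' + 1), l k = n := by
        rw [← hln, ← Finset.sum_range_add_sum_Ico l hmn]
        have : ∑ i ∈ Ico (m' + 1) n, l i = 0 := by
          apply Finset.sum_eq_zero
          intro i hi
          rw [mem_Ico] at hi
          have := hl (Nat.le_of_succ_le hi.1)
          omega
        omega
      have hxle : ∑ k ∈ range (m' + 1), x k ≤ n := by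
        rw [← hxn]
        apply Finset.sum_le_sum_of_subset (Finset.range_subset_range.2 hmn)
      omega
    set j : ℤ := (l m' : ℤ) - m' - 1 with hj
    have hNj := hN j
    rw [ncard_boxes' n x hx0 j, ncard_boxes' n l hl0 j] at hNj
    have hNZ : (∑ i ∈ range n, ((x i - (j + i).toNat : ℕ) : ℤ))
        ≤ ∑ i ∈ range n, ((l i - (j + i).toNat : ℕ) : ℤ) := by
      exact_mod_cast hNj
    rw [key x j, key l j] at hNZ
    -- compute N_l exactly
    have hNl : ∑ i ∈ range n, max ((l i : ℤ) - max (j + i) 0) 0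
        = ∑ i ∈ range (m' + 1), ((l i : ℤ) - max (j + (i:ℤ)) 0) := by
      rw [← Finset.sum_range_add_sum_Ico (fun i => max ((l i : ℤ) - max (j + (i:ℤ)) 0) 0) hmn]
      have h1 : ∑ i ∈ Ico (m' + 1) n, max ((l i : ℤ) - max (j + (i:ℤ)) 0) 0 = 0 := by
        apply Finset.sum_eq_zero
        intro i hi
        rw [mem_Ico] at hi
        have hle : (l i : ℤ) ≤ l m' := by exact_mod_cast hl (Nat.le_of_succ_le hi.1)
        have : (m' : ℤ) + 1 ≤ i := by exact_mod_cast hi.1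
        apply max_eq_right
        have : j + (i:ℤ) ≥ (l m' : ℤ) := by omega
        have h0 : (1:ℤ) ≤ l m' := by exact_mod_cast hlm'
        omega
      have h2 : ∑ i ∈ range (m' + 1), max ((l i : ℤ) - max (j + (i:ℤ)) 0) 0
          = ∑ i ∈ range (m' + 1), ((l i : ℤ) - max (j + (i:ℤ)) 0) := by
        apply Finset.sum_congr rfl
        intro i hi
        rw [mem_range] at hi
        apply max_eq_left
        have h1 : (l m' : ℤ) ≤ l i := by exact_mod_cast hl (Nat.lt_succ_iff.1 hi)
        have h2 : (i : ℤ) ≤ m' := by exact_mod_cast Nat.lt_succ_iff.1 hi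
        have h0 : (1:ℤ) ≤ l m' := by exact_mod_cast hlm'
        omega
      rw [h1, h2]; ring
    have hNx : ∑ i ∈ range (m' + 1), ((x i : ℤ) - max (j + (i:ℤ)) 0)
        ≤ ∑ i ∈ range n, max ((x i : ℤ) - max (j + i) 0) 0 :=
      prefix_sum_le' n (m' + 1) hmn _
    rw [hNl] at hNZ
    have hcast : (∑ k ∈ range (m' + 1), l k : ℤ) < ∑ k ∈ range (m' + 1), x k := by
      exact_mod_cast hlt
    push_cast at hcast
    rw [Finset.sum_sub_distrib] at hNZ
    rw [Finset.sum_sub_distrib] at hNx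
    omega
end

section
/- Let λ and χ be partitions of n. Then λ ≥ χ in dominance order if and only if there exist enumerations b_1,...,b_n of the boxes of λ and b_1',...,b_n' of the boxes of χ such that ct(b_i) ≥ ct(b_i') for all 1 ≤ i ≤ n. -/
open Finset

private lemma lowerFilter {n : ℕ} (p : ℕ → Prop) [DecidablePred p]
    (hp : ∀ a b : ℕ, a ≤ b → p b → p a) :
    (range n).filter p = range ((range n).filter p).card := by
  ext k
  simp only [mem_filter, mem_range]
  constructor
  · rintro ⟨hk, hpk⟩
    have h1 : range (k + 1) ⊆ (range n).filter p := by
      intro j hj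
      rw [mem_range] at hj
      exact mem_filter.2 ⟨mem_range.2 (lt_of_le_of_lt (Nat.le_of_lt_succ hj) hk),
        hp j k (Nat.le_of_lt_succ hj) hpk⟩
    have := card_le_card h1
    simpa using this
  · intro hk
    by_contra hcon
    have h2 : (range n).filter p ⊆ range k := by
      intro j hj
      rw [mem_filter, mem_range] at hj
      rw [mem_range]
      by_contra hjk
      push_neg at hjk
      exact hcon ⟨lt_of_le_of_lt hjk hj.1, hp k j hjk hj.2⟩
    have := card_le_card h2
    simp only [card_range] at this
    omega

private lemma sum_tsub_spec {n : ℕ} (f a : ℕ → ℕ) (hf : Antitone f) (ha : Monotone a) :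
    ∃ m ≤ n, (∀ r < m, a r < f r) ∧
      (∑ r ∈ range n, ((f r - a r : ℕ) : ℤ)) =
        ∑ r ∈ range m, (f r : ℤ) - ∑ r ∈ range m, (a r : ℤ) := by
  set m := ((range n).filter (fun r => a r < f r)).card with hm
  have hrange : (range n).filter (fun r => a r < f r) = range m :=
    lowerFilter _ (fun u v huv hv => lt_of_le_of_lt (ha huv) (lt_of_lt_of_le hv (hf huv)))
  have hmn : m ≤ n := by
    rw [hm]
    exact (card_filter_le _ _).trans (by simp)
  refine ⟨m, hmn, ?_, ?_⟩
  · intro r hr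
    have : r ∈ (range n).filter (fun r => a r < f r) := by
      rw [hrange]; exact mem_range.2 hr
    exact (mem_filter.1 this).2
  · have hsub : ∑ r ∈ range n, ((f r - a r : ℕ) : ℤ) = ∑ r ∈ range m, ((f r - a r : ℕ) : ℤ) := by
      symm
      apply sum_subset (range_subset_range.2 hmn)
      intro r hrn hrm
      have hnlt : ¬ (a r < f r) := by
        intro hlt
        have : r ∈ range m := by rw [← hrange]; exact mem_filter.2 ⟨hrn, hlt⟩
        exact hrm this
      have : f r - a r = 0 := by omega
      simp [this]
    rw [hsub, ← sum_sub_distrib]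
    apply sum_congr rfl
    intro r hr
    have hr' : a r < f r := by
      have : r ∈ (range n).filter (fun r => a r < f r) := by rw [hrange]; exact hr
      exact (mem_filter.1 this).2
    omega
private lemma key_forward {n : ℕ} {l x : ℕ → ℕ} (hl : Antitone l) (hx : Antitone x)
    (hdom : ∀ i : ℕ, ∑ k ∈ range i, x k ≤ ∑ k ∈ range i, l k) (a : ℕ → ℕ)
    (ha : Monotone a) :
    ∑ r ∈ range n, (x r - a r) ≤ ∑ r ∈ range n, (l r - a r) := by
  obtain ⟨m, hmn, hma, hsum⟩ := sum_tsub_spec (n := n) x a hx ha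
  have h1 : (∑ r ∈ range n, ((x r - a r : ℕ) : ℤ)) ≤ ∑ r ∈ range n, ((l r - a r : ℕ) : ℤ) := by
    rw [hsum]
    have h2 : (∑ r ∈ range m, (x r : ℤ)) ≤ ∑ r ∈ range m, (l r : ℤ) := by
      exact_mod_cast hdom m
    have h3 : ∀ r ∈ range m, (l r : ℤ) - a r ≤ ((l r - a r : ℕ) : ℤ) := by
      intro r _; omega
    calc (∑ r ∈ range m, (x r : ℤ)) - ∑ r ∈ range m, (a r : ℤ)
        ≤ (∑ r ∈ range m, (l r : ℤ)) - ∑ r ∈ range m, (a r : ℤ) := by linarith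
      _ = ∑ r ∈ range m, ((l r : ℤ) - a r) := (sum_sub_distrib _ _).symm
      _ ≤ ∑ r ∈ range m, ((l r - a r : ℕ) : ℤ) := sum_le_sum h3
      _ ≤ ∑ r ∈ range n, ((l r - a r : ℕ) : ℤ) := by
          apply sum_le_sum_of_subset_of_nonneg (range_subset_range.2 hmn)
          intro i _ _; positivity
  exact_mod_cast h1

private lemma key_backward {n : ℕ} {l x : ℕ → ℕ} (hl : Antitone l) (hx : Antitone x)
    (hcount : ∀ c : ℤ,
      ∑ r ∈ range n, (x r - (c + r).toNat) ≤ ∑ r ∈ range n, (l r - (c + r).toNat)) :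
    ∀ i ≤ n, ∑ k ∈ range i, x k ≤ ∑ k ∈ range i, l k := by
  intro i hin
  by_contra hcon
  push_neg at hcon
  set c : ℤ := (l i : ℤ) - i with hc
  set a : ℕ → ℕ := fun r => (c + r).toNat with ha
  have hamono : Monotone a := by
    intro r s hrs
    apply Int.toNat_le_toNat
    have : (r : ℤ) ≤ s := by exact_mod_cast hrs
    omega
  have halr : ∀ r, r ≤ i → a r ≤ l r := by
    intro r hri
    have h1 : l i ≤ l r := hl hri
    rw [ha]
    simp only []
    rw [Int.toNat_le]
    have : (r : ℤ) ≤ i := by exact_mod_cast hri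
    omega
  have harl : ∀ r, i ≤ r → l r ≤ a r := by
    intro r hir
    have h1 : l r ≤ l i := hl hir
    have h2 : (i : ℤ) ≤ r := by exact_mod_cast hir
    have h0 : (0 : ℤ) ≤ c + r := by omega
    rw [ha]
    simp only []
    rw [Int.le_toNat h0]
    omega
  obtain ⟨j, hjn, hja, hNl⟩ := sum_tsub_spec (n := n) l a hl hamono
  have hNx : (∑ r ∈ range i, (x r : ℤ)) - (∑ r ∈ range i, (a r : ℤ)) ≤
      ∑ r ∈ range n, ((x r - a r : ℕ) : ℤ) := by
    calc (∑ r ∈ range i, (x r : ℤ)) - ∑ r ∈ range i, (a r : ℤ)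
        = ∑ r ∈ range i, ((x r : ℤ) - a r) := (sum_sub_distrib _ _).symm
      _ ≤ ∑ r ∈ range i, ((x r - a r : ℕ) : ℤ) := sum_le_sum (fun r _ => by omega)
      _ ≤ ∑ r ∈ range n, ((x r - a r : ℕ) : ℤ) := by
          apply sum_le_sum_of_subset_of_nonneg (range_subset_range.2 hin)
          intro k _ _; positivity
  have hcast : (∑ r ∈ range n, ((x r - a r : ℕ) : ℤ)) ≤ ∑ r ∈ range n, ((l r - a r : ℕ) : ℤ) := by
    exact_mod_cast hcount c
  have hkey : (∑ r ∈ range j, (l r : ℤ)) - ∑ r ∈ range j, (a r : ℤ) ≤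
      (∑ r ∈ range i, (l r : ℤ)) - ∑ r ∈ range i, (a r : ℤ) := by
    rcases le_total j i with h | h
    · have h3 : ∑ r ∈ Ico j i, (a r : ℤ) ≤ ∑ r ∈ Ico j i, (l r : ℤ) := by
        apply sum_le_sum
        intro r hr
        exact_mod_cast halr r (le_of_lt (mem_Ico.1 hr).2)
      have h1 := sum_Ico_eq_sub (fun r => (l r : ℤ)) h
      have h2 := sum_Ico_eq_sub (fun r => (a r : ℤ)) h
      linarith
    · have h3 : ∑ r ∈ Ico i j, (l r : ℤ) ≤ ∑ r ∈ Ico i j, (a r : ℤ) := by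
        apply sum_le_sum
        intro r hr
        exact_mod_cast harl r (mem_Ico.1 hr).1
      have h1 := sum_Ico_eq_sub (fun r => (l r : ℤ)) h
      have h2 := sum_Ico_eq_sub (fun r => (a r : ℤ)) h
      linarith
  have hconZ : (∑ k ∈ range i, (l k : ℤ)) < ∑ k ∈ range i, (x k : ℤ) := by
    exact_mod_cast hcon
  linarith [hNx, hcast, hNl, hkey, hconZ]

private lemma box_card {n : ℕ} (l : ℕ → ℕ) (hbd : ∀ i, l i ≤ n) (c : ℤ) :
    (((range n) ×ˢ (range n)).filter (fun p => p.2 < l p.1 ∧ c ≤ (p.2 : ℤ) - p.1)).card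
      = ∑ i ∈ range n, (l i - (c + i).toNat) := by
  rw [card_eq_sum_card_fiberwise (f := Prod.fst) (t := range n)
    (fun p hp => (mem_product.1 (mem_filter.1 hp).1).1)]
  apply sum_congr rfl
  intro i hi
  have hi' : i < n := mem_range.1 hi
  have hset : (((range n) ×ˢ (range n)).filter
        (fun p => p.2 < l p.1 ∧ c ≤ (p.2 : ℤ) - p.1)).filter (fun p => p.1 = i)
      = (Finset.Ico ((c + i).toNat) (l i)).image (fun k => (i, k)) := by
    ext p
    simp only [mem_filter, mem_product, mem_range, mem_image, mem_Ico]
    constructor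
    · rintro ⟨⟨⟨h1, h2⟩, h3, h4⟩, h5⟩
      refine ⟨p.2, ⟨?_, by rwa [h5] at h3⟩, ?_⟩
      · rw [Int.toNat_le]
        rw [h5] at h4
        omega
      · exact Prod.ext h5.symm rfl
    · rintro ⟨k, ⟨hk1, hk2⟩, rfl⟩
      rw [Int.toNat_le] at hk1
      refine ⟨⟨⟨hi', lt_of_lt_of_le hk2 (hbd i)⟩, hk2, by omega⟩, rfl⟩
  rw [hset, card_image_of_injective _ (fun a b h => (Prod.mk.injEq _ _ _ _ ▸ h : _ ∧ _).2),
    Nat.card_Ico]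
private lemma box_card_all {n : ℕ} (l : ℕ → ℕ) (hbd : ∀ i, l i ≤ n)
    (hln : ∑ i ∈ range n, l i = n) :
    (((range n) ×ˢ (range n)).filter (fun p => p.2 < l p.1)).card = n := by
  have h1 : ((range n) ×ˢ (range n)).filter (fun p => p.2 < l p.1)
      = ((range n) ×ˢ (range n)).filter (fun p => p.2 < l p.1 ∧ (-(n:ℤ)) ≤ (p.2 : ℤ) - p.1) := by
    ext p
    simp only [mem_filter, mem_product, mem_range]
    constructor
    · rintro ⟨⟨h1, h2⟩, h3⟩
      refine ⟨⟨h1, h2⟩, h3, by omega⟩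
    · rintro ⟨h, h3, _⟩; exact ⟨h, h3⟩
  rw [h1, box_card l hbd]
  calc ∑ i ∈ range n, (l i - (-(n:ℤ) + i).toNat) = ∑ i ∈ range n, l i := by
        apply sum_congr rfl
        intro i hi
        have : i < n := mem_range.1 hi
        have h0 : (-(n:ℤ) + i).toNat = 0 := by
          apply Int.toNat_of_nonpos
          omega
        rw [h0, Nat.sub_zero]
    _ = n := hln

private lemma perm_count {n : ℕ} (f : Fin n → ℤ) (σ : Equiv.Perm (Fin n)) (c : ℤ) :
    (univ.filter fun j => c ≤ f (σ j)).card = (univ.filter fun j => c ≤ f j).card := by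
  apply card_bij (fun j _ => σ j)
  · intro a ha
    simp only [mem_filter, mem_univ, true_and] at *
    exact ha
  · intro a _ b _ hab
    exact σ.injective hab
  · intro b hb
    refine ⟨σ.symm b, ?_, by simp⟩
    simp only [mem_filter, mem_univ, true_and, Equiv.apply_symm_apply] at *
    exact hb

private lemma equiv_count {n : ℕ} (s : Finset (ℕ × ℕ)) (E : Fin n ≃ {p // p ∈ s})
    (q : ℕ × ℕ → Prop) [DecidablePred q] :
    (univ.filter fun j : Fin n => q (E j : ℕ × ℕ)).card = (s.filter q).card := by
  apply card_bij (fun j _ => ((E j : ℕ × ℕ)))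
  · intro a ha
    simp only [mem_filter, mem_univ, true_and] at ha
    exact mem_filter.2 ⟨(E a).2, ha⟩
  · intro a _ b _ hab
    exact E.injective (Subtype.ext hab)
  · intro p hp
    refine ⟨E.symm ⟨p, (mem_filter.1 hp).1⟩, ?_, by simp⟩
    simp only [mem_filter, mem_univ, true_and, Equiv.apply_symm_apply]
    exact (mem_filter.1 hp).2

private lemma mono_compare {n : ℕ} (u v : Fin n → ℤ) (hu : Monotone u) (hv : Monotone v)
    (h : ∀ c : ℤ, (univ.filter fun j => c ≤ v j).card ≤ (univ.filter fun j => c ≤ u j).card)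
    (i : Fin n) : v i ≤ u i := by
  by_contra hlt
  push_neg at hlt
  set c := v i with hc
  have h1 : Finset.Ici i ⊆ univ.filter fun j => c ≤ v j := by
    intro j hj
    simp only [mem_filter, mem_univ, true_and]
    exact hv (mem_Ici.1 hj)
  have h2 : (univ.filter fun j => c ≤ u j) ⊆ Finset.Ioi i := by
    intro j hj
    simp only [mem_filter, mem_univ, true_and] at hj
    rw [mem_Ioi]
    by_contra hji
    push_neg at hji
    exact absurd hj (not_le.2 (lt_of_le_of_lt (hu hji) hlt))
  have c1 := card_le_card h1
  have c2 := card_le_card h2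
  rw [Fin.card_Ici] at c1
  rw [Fin.card_Ioi] at c2
  have := h c
  have hi : (i : ℕ) < n := i.isLt
  omega

private lemma count_le {n : ℕ} {l x : ℕ → ℕ} (e e' : Fin n → ℕ × ℕ)
    (he : Function.Injective e) (he' : Function.Injective e')
    (hct : ∀ i, ((e' i).2 : ℤ) - (e' i).1 ≤ ((e i).2 : ℤ) - (e i).1)
    (hBl : ∀ i, e i ∈ ((range n) ×ˢ (range n)).filter (fun p => p.2 < l p.1))
    (hBx : ∀ i, e' i ∈ ((range n) ×ˢ (range n)).filter (fun p => p.2 < x p.1))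
    (hcardx : (((range n) ×ˢ (range n)).filter (fun p => p.2 < x p.1)).card = n)
    (c : ℤ) :
    (((range n) ×ˢ (range n)).filter (fun p => p.2 < x p.1 ∧ c ≤ (p.2 : ℤ) - p.1)).card ≤
    (((range n) ×ˢ (range n)).filter (fun p => p.2 < l p.1 ∧ c ≤ (p.2 : ℤ) - p.1)).card := by
  classical
  set Bx := ((range n) ×ˢ (range n)).filter (fun p => p.2 < x p.1) with hBxdef
  have hsurj : Function.Surjective (fun i : Fin n => (⟨e' i, hBx i⟩ : {p // p ∈ Bx})) := by
    have hinj : Function.Injective (fun i : Fin n => (⟨e' i, hBx i⟩ : {p // p ∈ Bx})) :=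
      fun a b hab => he' (congrArg Subtype.val hab)
    have hcard : Fintype.card (Fin n) = Fintype.card {p // p ∈ Bx} := by
      rw [Fintype.card_coe, hcardx, Fintype.card_fin]
    exact ((Fintype.bijective_iff_injective_and_card _).2 ⟨hinj, hcard⟩).2
  set S' := univ.filter (fun i : Fin n => c ≤ ((e' i).2 : ℤ) - (e' i).1) with hS'
  set S := univ.filter (fun i : Fin n => c ≤ ((e i).2 : ℤ) - (e i).1) with hS
  have step1 : ((range n) ×ˢ (range n)).filter (fun p => p.2 < x p.1 ∧ c ≤ (p.2 : ℤ) - p.1)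
      ⊆ S'.image e' := by
    intro p hp
    rw [mem_filter, mem_product] at hp
    obtain ⟨⟨hp1, hp2⟩, hp3, hp4⟩ := hp
    have hpBx : p ∈ Bx := by
      rw [hBxdef, mem_filter, mem_product]
      exact ⟨⟨hp1, hp2⟩, hp3⟩
    obtain ⟨i, hi⟩ := hsurj ⟨p, hpBx⟩
    have hip : e' i = p := congrArg Subtype.val hi
    rw [mem_image]
    refine ⟨i, ?_, hip⟩
    rw [hS', mem_filter]
    exact ⟨mem_univ _, by rw [hip]; exact hp4⟩
  have step2 : S' ⊆ S := by
    intro i hi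
    rw [hS', mem_filter] at hi
    rw [hS, mem_filter]
    exact ⟨mem_univ _, le_trans hi.2 (hct i)⟩
  have step3 : S.image e ⊆
      ((range n) ×ˢ (range n)).filter (fun p => p.2 < l p.1 ∧ c ≤ (p.2 : ℤ) - p.1) := by
    intro p hp
    rw [mem_image] at hp
    obtain ⟨i, hi, rfl⟩ := hp
    rw [hS, mem_filter] at hi
    have := hBl i
    rw [mem_filter, mem_product] at this
    rw [mem_filter, mem_product]
    exact ⟨this.1, this.2, hi.2⟩
  calc (((range n) ×ˢ (range n)).filter (fun p => p.2 < x p.1 ∧ c ≤ (p.2 : ℤ) - p.1)).card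
      ≤ (S'.image e').card := card_le_card step1
    _ ≤ S'.card := card_image_le
    _ ≤ S.card := card_le_card step2
    _ = (S.image e).card := (card_image_of_injective _ he).symm
    _ ≤ _ := card_le_card step3

/-- For partitions `λ, χ` of `n`, dominance order `λ ≥ χ` holds if and only if there are
enumerations `b_1,…,b_n` of the boxes of `λ` and `b_1',…,b_n'` of the boxes of `χ` with
`ct(b_i) ≥ ct(b_i')` for all `i`.  Boxes of `λ` are pairs `(i,k)` with `k < λ i`
(rows indexed from `0`), and the content of `(i,k)` is `k - i`. -/

theorem stmt7 (n : ℕ) (l x : ℕ → ℕ)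
    (hl : Antitone l) (hx : Antitone x)
    (hl0 : ∀ i, n ≤ i → l i = 0) (hx0 : ∀ i, n ≤ i → x i = 0)
    (hln : ∑ i ∈ range n, l i = n) (hxn : ∑ i ∈ range n, x i = n) :
    (∀ i : ℕ, ∑ k ∈ range i, x k ≤ ∑ k ∈ range i, l k) ↔
    (∃ e e' : Fin n → ℕ × ℕ,
      Function.Injective e ∧ (∀ i, (e i).2 < l (e i).1) ∧
      Function.Injective e' ∧ (∀ i, (e' i).2 < x (e' i).1) ∧
      ∀ i, ((e' i).2 : ℤ) - (e' i).1 ≤ ((e i).2 : ℤ) - (e i).1) := by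
  classical
  have hbdl : ∀ i, l i ≤ n := by
    intro i
    rcases lt_or_ge i n with h | h
    · calc l i ≤ ∑ k ∈ range n, l k :=
          single_le_sum (fun k _ => Nat.zero_le (l k)) (mem_range.2 h)
        _ = n := hln
    · rw [hl0 i h]; exact Nat.zero_le n
  have hbdx : ∀ i, x i ≤ n := by
    intro i
    rcases lt_or_ge i n with h | h
    · calc x i ≤ ∑ k ∈ range n, x k :=
          single_le_sum (fun k _ => Nat.zero_le (x k)) (mem_range.2 h)
        _ = n := hxn
    · rw [hx0 i h]; exact Nat.zero_le n
  have hcardl := box_card_all l hbdl hln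
  have hcardx := box_card_all x hbdx hxn
  constructor
  · -- forward: dominance gives the enumerations
    intro hdom
    set E : Fin n ≃ {p // p ∈ ((range n) ×ˢ (range n)).filter (fun p => p.2 < l p.1)} :=
      (Finset.equivFinOfCardEq hcardl).symm with hE
    set E' : Fin n ≃ {p // p ∈ ((range n) ×ˢ (range n)).filter (fun p => p.2 < x p.1)} :=
      (Finset.equivFinOfCardEq hcardx).symm with hE'
    set f : Fin n → ℤ := fun j => (((E j : ℕ × ℕ)).2 : ℤ) - ((E j : ℕ × ℕ)).1 with hf
    set g : Fin n → ℤ := fun j => (((E' j : ℕ × ℕ)).2 : ℤ) - ((E' j : ℕ × ℕ)).1 with hg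
    set σ := Tuple.sort f with hσ
    set τ := Tuple.sort g with hτ
    have hcount : ∀ c : ℤ,
        (univ.filter fun j => c ≤ (g ∘ τ) j).card ≤ (univ.filter fun j => c ≤ (f ∘ σ) j).card := by
      intro c
      have e1 : (univ.filter fun j => c ≤ (g ∘ τ) j).card = (univ.filter fun j => c ≤ g j).card :=
        perm_count g τ c
      have e2 : (univ.filter fun j => c ≤ f j).card = (univ.filter fun j => c ≤ (f ∘ σ) j).card :=
        (perm_count f σ c).symm
      have e3 : (univ.filter fun j => c ≤ g j).card
          = ((((range n) ×ˢ (range n)).filter (fun p => p.2 < x p.1)).filter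
              (fun p => c ≤ (p.2 : ℤ) - p.1)).card :=
        equiv_count _ E' (fun p => c ≤ (p.2 : ℤ) - p.1)
      have e4 : (univ.filter fun j => c ≤ f j).card
          = ((((range n) ×ˢ (range n)).filter (fun p => p.2 < l p.1)).filter
              (fun p => c ≤ (p.2 : ℤ) - p.1)).card :=
        equiv_count _ E (fun p => c ≤ (p.2 : ℤ) - p.1)
      rw [e1, e3, filter_filter, ← e2, e4, filter_filter, box_card l hbdl c, box_card x hbdx c]
      have hamono : Monotone (fun r : ℕ => (c + r).toNat) := by
        intro r s hrs
        apply Int.toNat_le_toNat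
        have : (r : ℤ) ≤ s := by exact_mod_cast hrs
        omega
      exact key_forward hl hx hdom _ hamono
    refine ⟨fun i => ((E (σ i) : ℕ × ℕ)), fun i => ((E' (τ i) : ℕ × ℕ)), ?_, ?_, ?_, ?_, ?_⟩
    · intro a b hab
      exact σ.injective (E.injective (Subtype.ext hab))
    · intro i
      have := (E (σ i)).2
      rw [mem_filter] at this
      exact this.2
    · intro a b hab
      exact τ.injective (E'.injective (Subtype.ext hab))
    · intro i
      have := (E' (τ i)).2
      rw [mem_filter] at this
      exact this.2
    · intro i
      exact mono_compare (f ∘ σ) (g ∘ τ) (Tuple.monotone_sort f) (Tuple.monotone_sort g) hcount i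
  · -- backward: enumerations give dominance
    rintro ⟨e, e', he, hel, he', hex, hct⟩
    have hBl : ∀ i, e i ∈ ((range n) ×ˢ (range n)).filter (fun p => p.2 < l p.1) := by
      intro i
      rw [mem_filter, mem_product, mem_range, mem_range]
      have h1 : (e i).1 < n := by
        by_contra h
        push_neg at h
        have h2 := hl0 _ h
        have h3 := hel i
        omega
      exact ⟨⟨h1, lt_of_lt_of_le (hel i) (hbdl _)⟩, hel i⟩
    have hBx : ∀ i, e' i ∈ ((range n) ×ˢ (range n)).filter (fun p => p.2 < x p.1) := by
      intro i
      rw [mem_filter, mem_product, mem_range, mem_range]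
      have h1 : (e' i).1 < n := by
        by_contra h
        push_neg at h
        have h2 := hx0 _ h
        have h3 := hex i
        omega
      exact ⟨⟨h1, lt_of_lt_of_le (hex i) (hbdx _)⟩, hex i⟩
    have hcount : ∀ c : ℤ,
        ∑ r ∈ range n, (x r - (c + r).toNat) ≤ ∑ r ∈ range n, (l r - (c + r).toNat) := by
      intro c
      rw [← box_card l hbdl c, ← box_card x hbdx c]
      exact count_le e e' he he' hct hBl hBx hcardx c
    intro i
    rcases le_or_gt i n with h | h
    · exact key_backward hl hx hcount i h
    · have h1 : ∑ k ∈ range i, x k = ∑ k ∈ range n, x k := by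
        symm
        apply sum_subset (range_subset_range.2 h.le)
        intro k _ hk
        rw [mem_range] at hk
        exact hx0 k (by omega)
      have h2 : ∑ k ∈ range i, l k = ∑ k ∈ range n, l k := by
        symm
        apply sum_subset (range_subset_range.2 h.le)
        intro k _ hk
        rw [mem_range] at hk
        exact hl0 k (by omega)
      rw [h1, h2, hxn, hln]
end

section
/- If λ is obtained from χ by a single raising operator (moving one box from row q to row p with p < q, both λ and χ being partitions of n), then for every integer j one has |{b ∈ λ : ct(b) ≥ j}| ≥ |{b' ∈ χ : ct(b') ≥ j}|. -/
open Finset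

/-- If the partition `λ` is obtained from the partition `χ` of `n` by a single raising
operator (moving the last box of row `q` to the end of an earlier row `p < q`, the result
again being a partition), then for every integer `j`,
`|{b ∈ λ : ct(b) ≥ j}| ≥ |{b' ∈ χ : ct(b') ≥ j}|`.  Rows are indexed from `0`; boxes
of `λ` are pairs `(i,k)` with `k < λ i` and `ct((i,k)) = k - i`. -/
theorem stmt8 (n p q : ℕ) (l x : ℕ → ℕ)
    (hx : Antitone x) (hl : Antitone l)
    (hpq : p < q) (hq : 0 < x q)
    (hp' : l p = x p + 1) (hq' : l q = x q - 1)
    (hother : ∀ k, k ≠ p → k ≠ q → l k = x k)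
    (hx0 : ∀ i, n ≤ i → x i = 0)
    (hxn : ∑ i ∈ range n, x i = n) :
    ∀ j : ℤ, {b : ℕ × ℕ | b.2 < x b.1 ∧ j ≤ (b.2 : ℤ) - b.1}.ncard ≤
      {b : ℕ × ℕ | b.2 < l b.1 ∧ j ≤ (b.2 : ℤ) - b.1}.ncard := by
  intro j
  have hqn : q < n := by
    by_contra h
    have := hx0 q (le_of_not_gt h)
    omega
  have hpn : p < n := hpq.trans hqn
  have hn : 0 < n := lt_of_le_of_lt (Nat.zero_le p) hpn
  have hx0n : x 0 ≤ n := by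
    calc x 0 ≤ ∑ i ∈ range n, x i :=
          Finset.single_le_sum (fun i _ => Nat.zero_le _) (Finset.mem_range.mpr hn)
      _ = n := hxn
  have hxiq : x q ≤ x p := hx hpq.le
  -- finiteness of the target set
  have hfin : {b : ℕ × ℕ | b.2 < l b.1 ∧ j ≤ (b.2 : ℤ) - b.1}.Finite := by
    apply Set.Finite.subset
      ((Finset.range n ×ˢ Finset.range (n + 2) : Finset (ℕ × ℕ)).finite_toSet)
    intro b hb
    simp only [Set.mem_setOf_eq] at hb
    have hb1 : b.1 < n := by
      by_contra h
      have hne : l b.1 = x b.1 := hother b.1 (by omega) (by omega)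
      have := hx0 b.1 (le_of_not_gt h)
      omega
    have hle : l b.1 ≤ x b.1 + 1 := by
      rcases eq_or_ne b.1 p with h | h
      · rw [h, hp']
      rcases eq_or_ne b.1 q with h2 | h2
      · rw [h2, hq']; omega
      · rw [hother b.1 h h2]; omega
    have hx0' : x b.1 ≤ x 0 := hx (Nat.zero_le _)
    simp only [Finset.coe_product, Set.mem_prod, Finset.mem_coe, Finset.mem_range]
    exact ⟨hb1, by omega⟩
  refine Set.ncard_le_ncard_of_injOn
    (fun b => if b = (q, x q - 1) then (p, x p) else b) ?_ ?_ hfin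
  · intro b hb
    simp only [Set.mem_setOf_eq] at hb
    rcases eq_or_ne b (q, x q - 1) with h | h
    · subst h
      have hif : (fun b => if b = (q, x q - 1) then (p, x p) else b) (q, x q - 1)
          = (p, x p) := if_pos rfl
      rw [if_pos rfl]
      simp only [Set.mem_setOf_eq]
      constructor
      · show x p < l p
        rw [hp']; omega
      · show j ≤ (x p : ℤ) - p
        have hb2 : j ≤ ((x q - 1 : ℕ) : ℤ) - q := hb.2
        have h1 : ((x q - 1 : ℕ) : ℤ) = (x q : ℤ) - 1 := Nat.cast_sub hq
        have h2 : (p : ℤ) < q := by exact_mod_cast hpq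
        have h3 : (x q : ℤ) ≤ x p := by exact_mod_cast hxiq
        omega
    · simp only [if_neg h, Set.mem_setOf_eq]
      refine ⟨?_, hb.2⟩
      rcases eq_or_ne b.1 p with h1 | h1
      · rw [h1, hp']; have := hb.1; rw [h1] at this; omega
      rcases eq_or_ne b.1 q with h2 | h2
      · rw [h2, hq']
        have hb1 := hb.1
        rw [h2] at hb1
        have : b.2 ≠ x q - 1 := by
          intro hc
          exact h (Prod.ext h2 hc)
        omega
      · rw [hother b.1 h1 h2]; exact hb.1
  · intro a ha b hb hab
    simp only at hab
    have hnot : ∀ c : ℕ × ℕ, c ∈ {b : ℕ × ℕ | b.2 < x b.1 ∧ j ≤ (b.2 : ℤ) - b.1} →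
        c ≠ (q, x q - 1) → c ≠ (p, x p) := by
      intro c hc hne hc2
      have := hc.1
      rw [hc2] at this
      simp at this
    rcases eq_or_ne a (q, x q - 1) with h1 | h1 <;> rcases eq_or_ne b (q, x q - 1) with h2 | h2
    · rw [h1, h2]
    · rw [if_pos h1, if_neg h2] at hab
      exact absurd hab.symm (hnot b hb h2)
    · rw [if_neg h1, if_pos h2] at hab
      exact absurd hab (hnot a ha h1)
    · rwa [if_neg h1, if_neg h2] at hab
end

section
/- Let λ be a partition, s a real number, and k an integer. Then the number of boxes of λ with content equal to k is |{x ∈ B_s(λ) : x ≥ k + s + 1}| if k ≥ 0, and |{x ∈ B_s(λ) : x ≥ k + s + 1}| + k if k < 0. -/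
/-- For a partition `λ` (antitone, eventually-zero `l : ℕ → ℕ`, rows indexed from `0`),
a real shift `s` and an integer `k`, the number of boxes of `λ` of content `k` equals
`|{x ∈ B_s(λ) : x ≥ k + s + 1}|` if `k ≥ 0`, and `|{x ∈ B_s(λ) : x ≥ k + s + 1}| + k`
if `k < 0`.  Here `B_s(λ) = {λ_j + s - j + 1 : j ≥ 1}` is the set of beta numbers
(with zero-indexed rows, `B_s(λ)` is the range of `j ↦ l j + s - j`), boxes are pairs
`(i,c)` with `c < l i`, and the content of `(i,c)` is `c - i`. -/
theorem stmt10 (s : ℝ) (k : ℤ) (l : ℕ → ℕ) (hl : Antitone l)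
    (hl0 : ∃ N, ∀ i, N ≤ i → l i = 0) :
    ({b : ℕ × ℕ | b.2 < l b.1 ∧ (b.2 : ℤ) - b.1 = k}.ncard : ℤ) =
      ({x ∈ Set.range (fun j : ℕ => (l j : ℝ) + s - j) | k + s + 1 ≤ x}.ncard : ℤ)
        + (if k < 0 then k else 0) := by
  obtain ⟨N, hN⟩ := hl0
  set f : ℕ → ℤ := fun j => (l j : ℤ) - j with hf
  have hfanti : StrictAnti f := by
    intro a b hab
    have h1 : l b ≤ l a := hl hab.le
    simp only [hf]
    omega
  set A : Set ℕ := {j | k + 1 ≤ f j} with hA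
  have hfin : A.Finite := by
    apply Set.Finite.subset (Set.finite_Iio (N + k.natAbs + 1))
    intro j hj
    simp only [hA, Set.mem_setOf_eq, hf] at hj
    simp only [Set.mem_Iio]
    rcases le_or_gt N j with h | h
    · have h0 := hN j h
      omega
    · omega
  -- rewrite the beta-number side
  have hg : {x ∈ Set.range (fun j : ℕ => (l j : ℝ) + s - j) | k + s + 1 ≤ x}
      = (fun j : ℕ => (l j : ℝ) + s - j) '' A := by
    ext x
    simp only [Set.mem_setOf_eq, Set.mem_image, Set.mem_range, hA, hf]
    constructor
    · rintro ⟨⟨j, rfl⟩, hx⟩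
      refine ⟨j, ?_, rfl⟩
      have h1 : (k : ℝ) + 1 ≤ (l j : ℝ) - j := by linarith
      exact_mod_cast h1
    · rintro ⟨j, hj, rfl⟩
      refine ⟨⟨j, rfl⟩, ?_⟩
      have h1 : (k : ℝ) + 1 ≤ (l j : ℝ) - j := by exact_mod_cast hj
      linarith
  have hginj : Function.Injective (fun j : ℕ => (l j : ℝ) + s - j) := by
    intro a b hab
    simp only at hab
    have h1 : ((f a : ℤ) : ℝ) = ((f b : ℤ) : ℝ) := by
      simp only [hf]; push_cast; linarith
    have h2 : f a = f b := by exact_mod_cast h1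
    exact hfanti.injective h2
  rw [hg, Set.ncard_image_of_injective _ hginj]
  by_cases hk : k < 0
  · simp only [if_pos hk]
    obtain ⟨n, hn⟩ : ∃ n : ℕ, (n : ℤ) = -k := ⟨k.natAbs, by omega⟩
    have hS : {b : ℕ × ℕ | b.2 < l b.1 ∧ (b.2 : ℤ) - b.1 = k}
        = (fun i : ℕ => (i, i - n)) '' (A \ Set.Iio n) := by
      ext ⟨i, c⟩
      simp only [Set.mem_setOf_eq, Set.mem_image, Set.mem_diff, Set.mem_Iio, hA, hf]
      constructor
      · rintro ⟨hc, hck⟩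
        refine ⟨i, ⟨by omega, by omega⟩, ?_⟩
        simp only [Prod.mk.injEq]
        exact ⟨trivial, by omega⟩
      · rintro ⟨j, ⟨hj1, hj2⟩, heq⟩
        injection heq with h1 h2
        subst h1; subst h2
        constructor <;> omega
    rw [hS, Set.ncard_image_of_injective _ (fun a b h => congrArg Prod.fst h)]
    have hsub : Set.Iio n ⊆ A := by
      intro i hi
      simp only [Set.mem_Iio] at hi
      simp only [hA, Set.mem_setOf_eq, hf]
      omega
    rw [Set.ncard_diff hsub (Set.finite_Iio n)]
    have hIio : (Set.Iio n).ncard = n := by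
      rw [← Finset.coe_Iio, Set.ncard_coe_finset, Nat.card_Iio]
    have hle : (Set.Iio n).ncard ≤ A.ncard := Set.ncard_le_ncard hsub hfin
    rw [hIio] at hle ⊢
    omega
  · simp only [if_neg hk, add_zero]
    have hS : {b : ℕ × ℕ | b.2 < l b.1 ∧ (b.2 : ℤ) - b.1 = k}
        = (fun i : ℕ => (i, i + k.toNat)) '' A := by
      ext ⟨i, c⟩
      simp only [Set.mem_setOf_eq, Set.mem_image, hA, hf]
      constructor
      · rintro ⟨hc, hck⟩
        refine ⟨i, by omega, ?_⟩
        simp only [Prod.mk.injEq]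
        exact ⟨trivial, by omega⟩
      · rintro ⟨j, hj, heq⟩
        injection heq with h1 h2
        subst h1; subst h2
        constructor <;> omega
    rw [hS, Set.ncard_image_of_injective _ (fun a b h => congrArg Prod.fst h)]
end

section
/- For real parameters c = (c_0, d_0, ..., d_{r-1}) with c_0 > 0, the relation λ• ≥_c χ• defined by: for all j ∈ ℝ and 0 ≤ l ≤ r-1, |{b ∈ λ• : d_{β(b)}/(r c_0) + ct(b) > j, or d_{β(b)}/(r c_0) + ct(b) = j and β(b) ≤ l}| ≥ |{b' ∈ χ• : d_{β(b')}/(r c_0) + ct(b') > j, or d_{β(b')}/(r c_0) + ct(b') = j and β(b') ≤ l}|, is a partial order (reflexive, transitive and antisymmetric) on the set of r-partitions of n. -/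
open Finset

/-- `Λ` is an `r`-partition of `n`: each component is a partition (antitone, vanishing
from row `n` on) and the total number of boxes is `n`. -/
def IsRPart (r n : ℕ) (Λ : Fin r → ℕ → ℕ) : Prop :=
  (∀ l, Antitone (Λ l)) ∧ (∀ l i, n ≤ i → Λ l i = 0) ∧
    (∑ l : Fin r, ∑ i ∈ range n, Λ l i) = n

/-- The counting function appearing in the definition of the order `≥_c`:
the number of boxes `b` of `Λ` (a box is a triple `(l, i, k)` with `k < Λ l i`,
with `β(b) = l` and `ct(b) = k - i`) such that `d_{β(b)}/(r c₀) + ct(b) > j`, or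
`d_{β(b)}/(r c₀) + ct(b) = j` and `β(b) ≤ t`. -/
noncomputable def cntC (r : ℕ) (c0 : ℝ) (d : Fin r → ℝ) (Λ : Fin r → ℕ → ℕ) (j : ℝ) (t : Fin r) : ℕ :=
  {b : Fin r × ℕ × ℕ | b.2.2 < Λ b.1 b.2.1 ∧
    (j < d b.1 / (r * c0) + ((b.2.2 : ℝ) - b.2.1) ∨
      (d b.1 / (r * c0) + ((b.2.2 : ℝ) - b.2.1) = j ∧ b.1 ≤ t))}.ncard

/-- The relation `λ• ≥_c χ•` on `r`-partitions. -/
def geC (r : ℕ) (c0 : ℝ) (d : Fin r → ℝ) (Λ X : Fin r → ℕ → ℕ) : Prop :=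
  ∀ (j : ℝ) (t : Fin r), cntC r c0 d X j t ≤ cntC r c0 d Λ j t

namespace Stmt11Aux

/-- The set of boxes on diagonal `m` of the partition `lam`. -/
def Diag (lam : ℕ → ℕ) (m : ℤ) : Set (ℕ × ℕ) :=
  {p | p.2 < lam p.1 ∧ (p.2 : ℤ) - (p.1 : ℤ) = m}

lemma diag_finite {n : ℕ} (lam : ℕ → ℕ) (hz : ∀ i, n ≤ i → lam i = 0) (m : ℤ) :
    (Diag lam m).Finite := by
  apply Set.Finite.subset (Finset.finite_toSet ((range n) ×ˢ (range (n + m.toNat))))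
  rintro ⟨a, b⟩ ⟨h1, h2⟩
  have ha : a < n := by
    by_contra hc; push_neg at hc; rw [hz a hc] at h1; omega
  simp only [Finset.coe_product, Set.mem_prod, Finset.mem_coe, Finset.mem_range]
  exact ⟨ha, by omega⟩

lemma mem_iff_diag {n : ℕ} (lam : ℕ → ℕ) (ha : Antitone lam) (hz : ∀ i, n ≤ i → lam i = 0)
    (i k : ℕ) : k < lam i ↔ min i k < (Diag lam ((k : ℤ) - (i : ℤ))).ncard := by
  set m : ℤ := (k : ℤ) - (i : ℤ) with hm
  constructor
  · intro hk
    set F : Finset (ℕ × ℕ) := (range (min i k + 1)).image (fun s => (i - s, k - s)) with hF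
    have hcard : F.card = min i k + 1 := by
      rw [hF, Finset.card_image_of_injOn, Finset.card_range]
      intro a haa b hbb hab
      simp only [Finset.mem_coe, Finset.mem_range] at haa hbb
      have := (Prod.mk.injEq _ _ _ _).mp hab
      omega
    have hsub : (F : Set (ℕ × ℕ)) ⊆ Diag lam m := by
      rintro ⟨a, b⟩ hab
      simp only [hF, Finset.coe_image, Set.mem_image, Finset.coe_range, Set.mem_Iio] at hab
      obtain ⟨s, hs, heq⟩ := hab
      simp only [Prod.mk.injEq] at heq
      obtain ⟨rfl, rfl⟩ := heq
      simp only [Diag, Set.mem_setOf_eq]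
      have hmono : lam i ≤ lam (i - s) := ha (by omega)
      exact ⟨by omega, by omega⟩
    have : min i k + 1 ≤ (Diag lam m).ncard := by
      calc min i k + 1 = (F : Set (ℕ × ℕ)).ncard := by rw [Set.ncard_coe_finset, hcard]
        _ ≤ (Diag lam m).ncard := Set.ncard_le_ncard hsub (diag_finite lam hz m)
    omega
  · intro hlt
    have hfin : (Diag lam m).Finite := diag_finite lam hz m
    have hcards : hfin.toFinset.card = (Diag lam m).ncard :=
      (Set.ncard_eq_toFinset_card _ hfin).symm
    have hfcard : (hfin.toFinset.image Prod.fst).card = hfin.toFinset.card := by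
      rw [Finset.card_image_of_injOn]
      intro p hp q hq hpq
      simp only [Finset.mem_coe, Set.Finite.mem_toFinset] at hp hq
      obtain ⟨_, hp2⟩ := hp
      obtain ⟨_, hq2⟩ := hq
      have : (p.2 : ℤ) = (q.2 : ℤ) := by omega
      exact Prod.ext hpq (by exact_mod_cast this)
    have hlb : ∀ a ∈ hfin.toFinset.image Prod.fst, i - k ≤ a := by
      intro a haf
      simp only [Finset.mem_image] at haf
      obtain ⟨p, hp, rfl⟩ := haf
      rw [Set.Finite.mem_toFinset] at hp
      obtain ⟨_, hp2⟩ := hp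
      omega
    have hex : ∃ a ∈ hfin.toFinset.image Prod.fst, i ≤ a := by
      by_contra hc
      push_neg at hc
      have hsub2 : hfin.toFinset.image Prod.fst ⊆ Finset.Ico (i - k) i := by
        intro a haf
        exact Finset.mem_Ico.mpr ⟨hlb a haf, hc a haf⟩
      have := Finset.card_le_card hsub2
      rw [Nat.card_Ico] at this
      omega
    obtain ⟨a, haf, hia⟩ := hex
    simp only [Finset.mem_image] at haf
    obtain ⟨⟨a', b'⟩, hp, rfl⟩ := haf
    rw [Set.Finite.mem_toFinset] at hp
    obtain ⟨hp1, hp2⟩ := hp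
    simp only at hp1 hp2 hia
    have hmono : lam a' ≤ lam i := ha hia
    omega

lemma part_ext {n : ℕ} (lam mu : ℕ → ℕ) (halam : Antitone lam) (hamu : Antitone mu)
    (hzlam : ∀ i, n ≤ i → lam i = 0) (hzmu : ∀ i, n ≤ i → mu i = 0)
    (h : ∀ m : ℤ, (Diag lam m).ncard = (Diag mu m).ncard) : lam = mu := by
  funext i
  have key : ∀ k, k < lam i ↔ k < mu i := by
    intro k
    rw [mem_iff_diag lam halam hzlam, h, ← mem_iff_diag mu hamu hzmu]
  have h1 := key (lam i)
  have h2 := key (mu i)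
  omega

/-- The set of boxes of an `r`-tuple of partitions. -/
def Box (r : ℕ) (Λ : Fin r → ℕ → ℕ) : Set (Fin r × ℕ × ℕ) :=
  {b | b.2.2 < Λ b.1 b.2.1}

/-- The weight of a box. -/
noncomputable def wt (r : ℕ) (c0 : ℝ) (d : Fin r → ℝ) (b : Fin r × ℕ × ℕ) : ℝ :=
  d b.1 / (r * c0) + ((b.2.2 : ℝ) - b.2.1)

lemma cntC_eq (r : ℕ) (c0 : ℝ) (d : Fin r → ℝ) (Λ : Fin r → ℕ → ℕ) (j : ℝ) (t : Fin r) :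
    cntC r c0 d Λ j t =
      {b | b ∈ Box r Λ ∧ (j < wt r c0 d b ∨ (wt r c0 d b = j ∧ b.1 ≤ t))}.ncard := rfl

lemma box_finite {r n : ℕ} (Λ : Fin r → ℕ → ℕ) (h : IsRPart r n Λ) : (Box r Λ).Finite := by
  obtain ⟨-, hz, hs⟩ := h
  have hle : ∀ l i, Λ l i ≤ n := by
    intro l i
    rcases le_or_gt n i with hi | hi
    · simp [hz l i hi]
    · calc Λ l i ≤ ∑ i ∈ range n, Λ l i :=
          Finset.single_le_sum (fun _ _ => Nat.zero_le _) (mem_range.2 hi)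
        _ ≤ ∑ l : Fin r, ∑ i ∈ range n, Λ l i :=
          Finset.single_le_sum (f := fun l => ∑ i ∈ range n, Λ l i) (fun _ _ => Nat.zero_le _) (mem_univ l)
        _ = n := hs
  apply Set.Finite.subset (Finset.finite_toSet ((univ : Finset (Fin r)) ×ˢ (range n) ×ˢ (range n)))
  rintro ⟨l, i, k⟩ hb
  simp only [Box, Set.mem_setOf_eq] at hb
  have h1 : i < n := by
    by_contra hc; push_neg at hc; rw [hz l i hc] at hb; omega
  simp only [Finset.coe_product, Set.mem_prod, Finset.mem_coe, Finset.mem_range, Finset.mem_univ]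
  exact ⟨trivial, h1, lt_of_lt_of_le hb (hle l i)⟩

lemma main {r n : ℕ} (c0 : ℝ) (d : Fin r → ℝ) {Λ X : Fin r → ℕ → ℕ}
    (hΛ : IsRPart r n Λ) (hX : IsRPart r n X)
    (h : ∀ (j : ℝ) (t : Fin r), cntC r c0 d Λ j t = cntC r c0 d X j t) : Λ = X := by
  rcases Nat.eq_zero_or_pos r with hr | hr
  · subst hr; funext l; exact l.elim0
  have finΛ := box_finite Λ hΛ
  have finX := box_finite X hX
  set w := wt r c0 d with hwdef
  set t0 : Fin r := ⟨0, hr⟩ with ht0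
  -- Step H : counts of boxes of weight strictly above j agree
  have hH : ∀ j : ℝ, ({b | b ∈ Box r Λ ∧ j < w b}).ncard
      = ({b | b ∈ Box r X ∧ j < w b}).ncard := by
    intro j
    obtain ⟨j', hj1, hj2⟩ : ∃ j', j < j' ∧ ∀ b : Fin r × ℕ × ℕ,
        (b ∈ Box r Λ ∨ b ∈ Box r X) → j < w b → j' < w b := by
      set V : Finset ℝ := ((finΛ.union finX).toFinset.image w).filter (fun x => j < x) with hV
      rcases V.eq_empty_or_nonempty with he | hne
      · refine ⟨j + 1, by linarith, fun b hb hwb => ?_⟩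
        exfalso
        have hmem : w b ∈ V := by
          rw [hV]
          refine Finset.mem_filter.mpr ⟨Finset.mem_image_of_mem w ?_, hwb⟩
          rw [Set.Finite.mem_toFinset, Set.mem_union]
          exact hb
        rw [he] at hmem
        exact Finset.notMem_empty _ hmem
      · have hm : j < V.min' hne := (Finset.mem_filter.mp (V.min'_mem hne)).2
        refine ⟨(j + V.min' hne) / 2, by linarith, ?_⟩
        intro b hb hwb
        have hmem : w b ∈ V := by
          rw [hV]
          refine Finset.mem_filter.mpr ⟨Finset.mem_image_of_mem w ?_, hwb⟩
          rw [Set.Finite.mem_toFinset, Set.mem_union]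
          exact hb
        have := V.min'_le _ hmem
        linarith
    have key : ∀ (A : Fin r → ℕ → ℕ), (∀ b, b ∈ Box r A → (b ∈ Box r Λ ∨ b ∈ Box r X)) →
        {b | b ∈ Box r A ∧ (j' < w b ∨ (w b = j' ∧ b.1 ≤ t0))} = {b | b ∈ Box r A ∧ j < w b} := by
      intro A hA
      ext b
      simp only [Set.mem_setOf_eq]
      constructor
      · rintro ⟨hb, hlt | ⟨heq, -⟩⟩
        · exact ⟨hb, lt_trans hj1 hlt⟩
        · exact ⟨hb, heq ▸ hj1⟩
      · rintro ⟨hb, hlt⟩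
        exact ⟨hb, Or.inl (hj2 b (hA b hb) hlt)⟩
    have hj := h j' t0
    rw [cntC_eq, cntC_eq, ← hwdef, key Λ (fun b hb => Or.inl hb),
      key X (fun b hb => Or.inr hb)] at hj
    exact hj
  -- Step E : counts of boxes of weight exactly j with component ≤ t agree
  have hE : ∀ (j : ℝ) (t : Fin r),
      ({b | b ∈ Box r Λ ∧ w b = j ∧ b.1 ≤ t}).ncard
        = ({b | b ∈ Box r X ∧ w b = j ∧ b.1 ≤ t}).ncard := by
    intro j t
    have dec : ∀ (A : Fin r → ℕ → ℕ), (Box r A).Finite →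
        ({b | b ∈ Box r A ∧ (j < w b ∨ (w b = j ∧ b.1 ≤ t))}).ncard
          = ({b | b ∈ Box r A ∧ j < w b}).ncard
            + ({b | b ∈ Box r A ∧ w b = j ∧ b.1 ≤ t}).ncard := by
      intro A finA
      rw [← Set.ncard_union_eq ?hd (finA.subset (fun b hb => hb.1))
        (finA.subset (fun b hb => hb.1))]
      case hd =>
        rw [Set.disjoint_left]
        rintro b ⟨-, hlt⟩ ⟨-, heq, -⟩
        rw [heq] at hlt
        exact lt_irrefl j hlt
      congr 1
      ext b
      simp only [Set.mem_setOf_eq, Set.mem_union]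
      tauto
    have heq := h j t
    rw [cntC_eq, cntC_eq, ← hwdef, dec Λ finΛ, dec X finX, hH j] at heq
    omega
  -- Step G : counts of boxes of weight exactly j with component exactly t agree
  have hG : ∀ (j : ℝ) (t : Fin r),
      ({b | b ∈ Box r Λ ∧ w b = j ∧ b.1 = t}).ncard
        = ({b | b ∈ Box r X ∧ w b = j ∧ b.1 = t}).ncard := by
    intro j t
    rcases Nat.eq_zero_or_pos t.val with ht | ht
    · have hset : ∀ (A : Fin r → ℕ → ℕ),
          {b | b ∈ Box r A ∧ w b = j ∧ b.1 ≤ t} = {b | b ∈ Box r A ∧ w b = j ∧ b.1 = t} := by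
        intro A
        ext b
        have hiff : b.1 ≤ t ↔ b.1 = t := by
          rw [Fin.le_def, Fin.ext_iff]; omega
        simp only [Set.mem_setOf_eq]
        tauto
      rw [← hset Λ, ← hset X]; exact hE j t
    · set t' : Fin r := ⟨t.val - 1, by omega⟩ with ht'
      have htv : t'.val = t.val - 1 := rfl
      have split : ∀ (A : Fin r → ℕ → ℕ), (Box r A).Finite →
          ({b | b ∈ Box r A ∧ w b = j ∧ b.1 ≤ t}).ncard =
            ({b | b ∈ Box r A ∧ w b = j ∧ b.1 ≤ t'}).ncard
              + ({b | b ∈ Box r A ∧ w b = j ∧ b.1 = t}).ncard := by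
        intro A finA
        rw [← Set.ncard_union_eq ?hd (finA.subset (fun b hb => hb.1))
          (finA.subset (fun b hb => hb.1))]
        case hd =>
          rw [Set.disjoint_left]
          rintro b ⟨-, -, hle⟩ ⟨-, -, heq⟩
          rw [Fin.le_def] at hle
          rw [Fin.ext_iff] at heq
          omega
        congr 1
        ext b
        have hiff : b.1 ≤ t ↔ (b.1 ≤ t' ∨ b.1 = t) := by
          rw [Fin.le_def, Fin.le_def, Fin.ext_iff]; omega
        simp only [Set.mem_setOf_eq, Set.mem_union]
        tauto
      have h1 := hE j t
      rw [split Λ finΛ, split X finX] at h1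
      have h2 := hE j t'
      omega
  -- translate into equality of diagonal counts componentwise
  have hinj : ∀ l : Fin r, Function.Injective (fun p : ℕ × ℕ => ((l, p) : Fin r × ℕ × ℕ)) := by
    intro l a b hab
    simpa using hab
  have hdiag : ∀ (l : Fin r) (m : ℤ), (Diag (Λ l) m).ncard = (Diag (X l) m).ncard := by
    intro l m
    have key : ∀ (A : Fin r → ℕ → ℕ),
        {b | b ∈ Box r A ∧ w b = d l / (r * c0) + (m : ℝ) ∧ b.1 = l}
          = (fun p : ℕ × ℕ => ((l, p) : Fin r × ℕ × ℕ)) '' Diag (A l) m := by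
      intro A
      ext ⟨l', i, k⟩
      simp only [Set.mem_setOf_eq, Set.mem_image, Box, Diag, hwdef, wt, Prod.mk.injEq]
      constructor
      · rintro ⟨hb, hwb, rfl⟩
        refine ⟨(i, k), ⟨hb, ?_⟩, by simp⟩
        have h1 : ((k : ℝ) - i) = (m : ℝ) := by linarith
        exact_mod_cast h1
      · rintro ⟨⟨i', k'⟩, ⟨hb, hm⟩, h3⟩
        simp only [Prod.mk.injEq] at h3
        obtain ⟨rfl, rfl, rfl⟩ := h3
        refine ⟨hb, ?_, rfl⟩
        have h1 : ((k' : ℝ)) - i' = ((m : ℝ)) := by exact_mod_cast hm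
        linarith
    have hgl := hG (d l / (r * c0) + (m : ℝ)) l
    rw [key Λ, key X, Set.ncard_image_of_injective _ (hinj l),
      Set.ncard_image_of_injective _ (hinj l)] at hgl
    exact hgl
  funext l
  exact part_ext (n := n) (Λ l) (X l) (hΛ.1 l) (hX.1 l) (hΛ.2.1 l) (hX.2.1 l) (hdiag l)

end Stmt11Aux

/-- For real parameters `c = (c₀, d_0, …, d_{r-1})` with `c₀ > 0`, the relation `≥_c`
is reflexive and transitive on all `r`-tuples of partitions, and antisymmetric on the
set of `r`-partitions of `n`; hence it is a partial order there. -/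
theorem stmt11 (r n : ℕ) (c0 : ℝ) (hc0 : 0 < c0) (d : Fin r → ℝ) :
    (∀ Λ : Fin r → ℕ → ℕ, IsRPart r n Λ → geC r c0 d Λ Λ) ∧
    (∀ Λ X Y : Fin r → ℕ → ℕ, IsRPart r n Λ → IsRPart r n X → IsRPart r n Y →
      geC r c0 d Λ X → geC r c0 d X Y → geC r c0 d Λ Y) ∧
    (∀ Λ X : Fin r → ℕ → ℕ, IsRPart r n Λ → IsRPart r n X →
      geC r c0 d Λ X → geC r c0 d X Λ → Λ = X) := by
  refine ⟨fun Λ _ j t => le_refl _,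
    fun Λ X Y _ _ _ h1 h2 j t => le_trans (h2 j t) (h1 j t), ?_⟩
  intro Λ X hΛ hX h1 h2
  exact Stmt11Aux.main c0 d hΛ hX (fun j t => le_antisymm (h2 j t) (h1 j t))
end

section
/- Under the hypotheses of the previous statement (existence of enumerations and non-negative integers μ_i with β(b_i) - μ_i ≡ β(b_i') mod r and μ_i = d_{β(b_i)} - d_{β(b_i')} + r(ct(b_i) - ct(b_i'))c_0), the multisets {ct(b) + (d_{β(b)} - β(b))/(r c_0) : b ∈ λ•} and {ct(b') + (d_{β(b')} - β(b'))/(r c_0) : b' ∈ χ•} are equal modulo c_0^{-1}, i.e., there is a bijection of boxes under which corresponding values differ by an integer multiple of 1/c_0. -/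
open Finset

/-- The content `ct(b) = col(b) - row(b)` of a box `b = (l, i, k)`. -/
def ctB {r : ℕ} (b : Fin r × ℕ × ℕ) : ℝ := (b.2.2 : ℝ) - b.2.1

/-- Under the hypotheses of the previous statement (enumerations `b_i`, `b_i'` of the
boxes of the `r`-partitions `λ•`, `χ•` and non-negative integers `μ_i` with
`β(b_i) - μ_i ≡ β(b_i') (mod r)` and
`μ_i = d_{β(b_i)} - d_{β(b_i')} + r (ct(b_i) - ct(b_i')) c₀`), the multisets
`{ct(b) + (d_{β(b)} - β(b))/(r c₀) : b ∈ λ•}` and the corresponding one for `χ•` are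
equal modulo `c₀⁻¹`: there is a bijection of boxes under which corresponding values
differ by an integer multiple of `1/c₀`. -/
theorem stmt13 (r n : ℕ) (c0 : ℝ) (hc0 : 0 < c0) (d : Fin r → ℝ)
    (Λ X : Fin r → ℕ → ℕ) (hΛ : IsRPart r n Λ) (hX : IsRPart r n X)
    (e e' : Fin n → Fin r × ℕ × ℕ)
    (he : Function.Injective e) (heb : ∀ i, (e i).2.2 < Λ (e i).1 (e i).2.1)
    (he' : Function.Injective e') (heb' : ∀ i, (e' i).2.2 < X (e' i).1 (e' i).2.1)
    (μ : Fin n → ℕ)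
    (hcong : ∀ i, (r : ℤ) ∣ (((e i).1 : ℤ) - (μ i : ℤ) - ((e' i).1 : ℤ)))
    (hval : ∀ i, (μ i : ℝ) = d (e i).1 - d (e' i).1 + r * (ctB (e i) - ctB (e' i)) * c0) :
    ∃ σ : Equiv.Perm (Fin n), ∀ i, ∃ m : ℤ,
      (ctB (e i) + (d (e i).1 - ((e i).1 : ℝ)) / (r * c0))
        - (ctB (e' (σ i)) + (d (e' (σ i)).1 - ((e' (σ i)).1 : ℝ)) / (r * c0))
      = m / c0 := by
  refine ⟨Equiv.refl _, fun i => ?_⟩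
  obtain ⟨k, hk⟩ := hcong i
  refine ⟨-k, ?_⟩
  have hr : (0:ℝ) < r := by exact_mod_cast (e i).1.pos
  have hkR : ((e i).1 : ℝ) - (μ i : ℝ) - ((e' i).1 : ℝ) = r * k := by
    exact_mod_cast congrArg (Int.cast : ℤ → ℝ) hk
  have hv := hval i
  simp only [Equiv.refl_apply]
  field_simp
  push_cast
  linear_combination (-1 : ℝ) * hv - hkR
end

section
/- Let λ• be an r-partition of n and S the column-strict tableau on λ• with S(b) = l + (i-1)r whenever b lies in row i of λ^l. Then the multiset {S(b) + 1 - (d_{β(b)} - d_{-1}) - r·ct(b)·c_0 : b ∈ λ•} uniquely determines S among all fillings of λ•. More generally: any filling of a single partition that is weakly increasing left to right and top to bottom is uniquely determined by its multiset of pairs (value, content). -/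
open Finset

/-- Boxes of the partition `l` (supported below row `N`). -/
def pboxes (N : ℕ) (l : ℕ → ℕ) : Finset (ℕ × ℕ) :=
  (range N ×ˢ range (l 0)).filter (fun b => b.2 < l b.1)

/-- The `t`-th box on the diagonal of content `c`. -/
def fdiag (c : ℤ) (t : ℕ) : ℕ × ℕ := ((-c).toNat + t, c.toNat + t)

/-- The diagonal of content `c`. -/
def pdiag (N : ℕ) (l : ℕ → ℕ) (c : ℤ) : Finset (ℕ × ℕ) :=
  (pboxes N l).filter (fun b => (b.2 : ℤ) - b.1 = c)

lemma mem_pboxes {N : ℕ} {l : ℕ → ℕ} (hl : Antitone l) (hl0 : ∀ i, N ≤ i → l i = 0)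
    {b : ℕ × ℕ} : b ∈ pboxes N l ↔ b.2 < l b.1 := by
  unfold pboxes
  simp only [Finset.mem_filter, Finset.mem_product, Finset.mem_range]
  refine ⟨fun h => h.2, fun h => ⟨⟨?_, ?_⟩, h⟩⟩
  · by_contra hN
    push_neg at hN
    rw [hl0 _ hN] at h; omega
  · exact lt_of_lt_of_le h (hl (Nat.zero_le _))

lemma fdiag_inj (c : ℤ) : Function.Injective (fdiag c) := by
  intro s t h
  have := congrArg Prod.fst h
  simpa [fdiag] using this

lemma fdiag_eq_self {c : ℤ} {b : ℕ × ℕ} (h : (b.2 : ℤ) - b.1 = c) :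
    fdiag c (min b.1 b.2) = b := by
  unfold fdiag
  obtain ⟨i, k⟩ := b
  simp only [Prod.mk.injEq]
  constructor <;> omega

lemma min_fdiag (c : ℤ) (t : ℕ) : min (fdiag c t).1 (fdiag c t).2 = t := by
  unfold fdiag; omega

lemma mem_pdiag {N : ℕ} {l : ℕ → ℕ} (hl : Antitone l) (hl0 : ∀ i, N ≤ i → l i = 0)
    {c : ℤ} {b : ℕ × ℕ} : b ∈ pdiag N l c ↔ b.2 < l b.1 ∧ (b.2 : ℤ) - b.1 = c := by
  unfold pdiag
  rw [Finset.mem_filter, mem_pboxes hl hl0]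

lemma fdiag_down {N : ℕ} {l : ℕ → ℕ} (hl : Antitone l) (hl0 : ∀ i, N ≤ i → l i = 0)
    {c : ℤ} {s t : ℕ} (hst : s ≤ t) (ht : fdiag c t ∈ pboxes N l) :
    fdiag c s ∈ pboxes N l := by
  induction t with
  | zero =>
    have hz : s = 0 := Nat.le_zero.mp hst
    subst hz; exact ht
  | succ t ih =>
    rcases Nat.eq_or_lt_of_le hst with rfl | h
    · exact ht
    · have hmem : fdiag c t ∈ pboxes N l := by
        rw [mem_pboxes hl hl0] at ht ⊢
        simp only [fdiag] at ht ⊢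
        have := hl (Nat.le_succ ((-c).toNat + t))
        simp only [Nat.add_succ] at ht
        omega
      exact ih (by omega) hmem

lemma pdiag_eq {N : ℕ} {l : ℕ → ℕ} (hl : Antitone l) (hl0 : ∀ i, N ≤ i → l i = 0) (c : ℤ) :
    pdiag N l c = (range ((pdiag N l c).card)).image (fdiag c) := by
  classical
  set D := pdiag N l c with hD
  have hMem : ∀ b ∈ D, fdiag c (min b.1 b.2) = b := by
    intro b hb
    exact fdiag_eq_self ((mem_pdiag hl hl0).mp hb).2
  set T := D.image (fun b => min b.1 b.2) with hT
  have himg : D.image (fun b => fdiag c (min b.1 b.2)) = D := by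
    have h2 := Finset.image_congr (f := fun b : ℕ × ℕ => fdiag c (min b.1 b.2))
      (g := id) (s := D) (fun b hb => hMem b hb)
    simpa using h2
  have hDT : D = T.image (fdiag c) := by
    rw [hT, Finset.image_image]
    exact himg.symm
  have hcard : T.card = D.card :=
    Finset.card_image_of_injOn (fun b hb b' hb' h => by
      rw [← hMem b hb, ← hMem b' hb', h])
  have hclosed : ∀ t ∈ T, ∀ s ≤ t, s ∈ T := by
    intro t ht s hs
    obtain ⟨b, hb, rfl⟩ := Finset.mem_image.mp ht
    have hbB : fdiag c (min b.1 b.2) ∈ pboxes N l := by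
      rw [hMem b hb]
      exact Finset.mem_of_mem_filter _ hb
    have hsB : fdiag c s ∈ pboxes N l := fdiag_down hl hl0 hs hbB
    have hsD : fdiag c s ∈ D := by
      rw [hD, mem_pdiag hl hl0]
      refine ⟨(mem_pboxes hl hl0).mp hsB, ?_⟩
      unfold fdiag; push_cast; omega
    refine Finset.mem_image.mpr ⟨fdiag c s, hsD, min_fdiag c s⟩
  have hTr : T = range T.card := by
    have hsub : T ⊆ range T.card := by
      intro t ht
      have hsub2 : range (t + 1) ⊆ T := fun s hs =>
        hclosed t ht s (Nat.lt_succ_iff.mp (Finset.mem_range.mp hs))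
      have := Finset.card_le_card hsub2
      rw [Finset.card_range] at this
      exact Finset.mem_range.mpr this
    exact Finset.eq_of_subset_of_card_le hsub (by simp)
  rw [← hcard, ← hTr]
  exact hDT

lemma box_iff {N : ℕ} {l : ℕ → ℕ} (hl : Antitone l) (hl0 : ∀ i, N ≤ i → l i = 0)
    (i k : ℕ) : k < l i ↔ min i k < (pdiag N l ((k : ℤ) - i)).card := by
  set c : ℤ := (k : ℤ) - i with hc
  have hfik : fdiag c (min i k) = (i, k) := fdiag_eq_self (b := (i, k)) rfl
  constructor
  · intro h
    have hD : (i, k) ∈ pdiag N l c := (mem_pdiag hl hl0).mpr ⟨h, rfl⟩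
    rw [pdiag_eq hl hl0 c] at hD
    obtain ⟨t, ht, hft⟩ := Finset.mem_image.mp hD
    simp only [fdiag, Prod.mk.injEq] at hft
    have ht' := Finset.mem_range.mp ht
    omega
  · intro h
    have : (i, k) ∈ pdiag N l c := by
      rw [pdiag_eq hl hl0 c]
      exact Finset.mem_image.mpr ⟨min i k, Finset.mem_range.mpr h, hfik⟩
    exact ((mem_pdiag hl hl0).mp this).1

lemma fdiag_mono {N : ℕ} {l : ℕ → ℕ} (hl : Antitone l) (hl0 : ∀ i, N ≤ i → l i = 0)
    (S : ℕ × ℕ → ℕ)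
    (hSr : ∀ i k, k + 1 < l i → S (i, k) ≤ S (i, k + 1))
    (hSc : ∀ i k, k < l (i + 1) → S (i, k) ≤ S (i + 1, k))
    {c : ℤ} {s t : ℕ} (hst : s ≤ t) (ht : fdiag c t ∈ pboxes N l) :
    S (fdiag c s) ≤ S (fdiag c t) := by
  induction t with
  | zero => simp [Nat.le_zero.mp hst]
  | succ t ih =>
    rcases Nat.eq_or_lt_of_le hst with rfl | h
    · exact le_refl _
    · have hmem : fdiag c t ∈ pboxes N l := fdiag_down hl hl0 (Nat.le_succ t) ht
      have h1 : S (fdiag c s) ≤ S (fdiag c t) := ih (by omega) hmem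
      refine h1.trans ?_
      set a := (-c).toNat + t with ha
      set b := c.toNat + t with hb
      have hft1 : fdiag c (t + 1) = (a + 1, b + 1) := by
        simp only [fdiag, Prod.mk.injEq]
        omega
      have hbox : b + 1 < l (a + 1) := by
        have := (mem_pboxes hl hl0).mp ht
        rw [hft1] at this; exact this
      have hstep1 : S (a, b) ≤ S (a, b + 1) :=
        hSr a b (lt_of_lt_of_le hbox (hl (Nat.le_succ a)))
      have hstep2 : S (a, b + 1) ≤ S (a + 1, b + 1) := hSc a (b + 1) hbox
      have hft : fdiag c t = (a, b) := rfl
      rw [hft, hft1]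
      exact hstep1.trans hstep2

/-- The sorted list of values along the diagonal of content `c`. -/
def diagList (N : ℕ) (l : ℕ → ℕ) (S : ℕ × ℕ → ℕ) (c : ℤ) : List ℕ :=
  (List.range ((pdiag N l c).card)).map (fun t => S (fdiag c t))

lemma diagList_sorted {N : ℕ} {l : ℕ → ℕ} (hl : Antitone l) (hl0 : ∀ i, N ≤ i → l i = 0)
    (S : ℕ × ℕ → ℕ)
    (hSr : ∀ i k, k + 1 < l i → S (i, k) ≤ S (i, k + 1))
    (hSc : ∀ i k, k < l (i + 1) → S (i, k) ≤ S (i + 1, k))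
    (c : ℤ) : List.Pairwise (· ≤ ·) (diagList N l S c) := by
  rw [List.pairwise_iff_getElem]
  intro a b ha hb hab
  simp only [diagList, List.length_map, List.length_range] at ha hb
  simp only [diagList, List.getElem_map, List.getElem_range]
  have hbB : fdiag c b ∈ pboxes N l := by
    have : fdiag c b ∈ pdiag N l c := by
      rw [pdiag_eq hl hl0 c]
      exact Finset.mem_image.mpr ⟨b, Finset.mem_range.mpr hb, rfl⟩
    exact Finset.mem_of_mem_filter _ this
  exact fdiag_mono hl hl0 S hSr hSc (le_of_lt hab) hbB

lemma diagList_coe {N : ℕ} {l : ℕ → ℕ} (hl : Antitone l) (hl0 : ∀ i, N ≤ i → l i = 0)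
    (S : ℕ × ℕ → ℕ) (c : ℤ) :
    (diagList N l S c : Multiset ℕ) = Multiset.map S (pdiag N l c).val := by
  have h1 : (pdiag N l c).val = Multiset.map (fdiag c) (range ((pdiag N l c).card)).val := by
    conv_lhs => rw [pdiag_eq hl hl0 c]
    exact Finset.image_val_of_injOn ((fdiag_inj c).injOn)
  rw [h1, Finset.range_val, ← Multiset.coe_range, Multiset.map_map]
  simp [diagList]

lemma map_range_eq_apply {α : Type*} (g g' : ℕ → α) {n n' : ℕ}
    (h : (List.range n).map g = (List.range n').map g') {t : ℕ} (ht : t < n) :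
    g t = g' t := by
  have hn : n = n' := by simpa using congrArg List.length h
  subst hn
  have h2 := congrArg (fun L : List α => L[t]?) h
  simp only [List.getElem?_map, List.getElem?_range ht] at h2
  simpa using h2

/-- A filling of a partition that is weakly increasing left to right along rows and top
to bottom down columns is uniquely determined (together with the shape) by the multiset
of pairs `(value, content)` of its boxes.  Partitions are encoded as antitone functions
`ℕ → ℕ` vanishing from row `N` on; boxes of `l` are pairs `(i,k)` with `k < l i`,
with content `k - i`. -/
theorem stmt14 (N : ℕ) (l l' : ℕ → ℕ) (hl : Antitone l) (hl' : Antitone l')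
    (hl0 : ∀ i, N ≤ i → l i = 0) (hl0' : ∀ i, N ≤ i → l' i = 0)
    (S S' : ℕ × ℕ → ℕ)
    (hSr : ∀ i k, k + 1 < l i → S (i, k) ≤ S (i, k + 1))
    (hSc : ∀ i k, k < l (i + 1) → S (i, k) ≤ S (i + 1, k))
    (hSr' : ∀ i k, k + 1 < l' i → S' (i, k) ≤ S' (i, k + 1))
    (hSc' : ∀ i k, k < l' (i + 1) → S' (i, k) ≤ S' (i + 1, k))
    (hmult :
      Multiset.map (fun b : ℕ × ℕ => (S b, (b.2 : ℤ) - b.1))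
        (((range N ×ˢ range (l 0)).filter (fun b => b.2 < l b.1)).val) =
      Multiset.map (fun b : ℕ × ℕ => (S' b, (b.2 : ℤ) - b.1))
        (((range N ×ˢ range (l' 0)).filter (fun b => b.2 < l' b.1)).val)) :
    (∀ i, l i = l' i) ∧ (∀ i k, k < l i → S (i, k) = S' (i, k)) := by
  classical
  -- per-diagonal multiset equality
  have hdiagmult : ∀ c : ℤ,
      Multiset.map S (pdiag N l c).val = Multiset.map S' (pdiag N l' c).val := by
    intro c
    have e1 : ∀ (l₀ : ℕ → ℕ) (S₀ : ℕ × ℕ → ℕ),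
        Multiset.map Prod.fst
          (Multiset.filter (fun p : ℕ × ℤ => p.2 = c)
            (Multiset.map (fun b : ℕ × ℕ => (S₀ b, (b.2 : ℤ) - b.1))
              (((range N ×ˢ range (l₀ 0)).filter (fun b => b.2 < l₀ b.1)).val))) =
        Multiset.map S₀ (pdiag N l₀ c).val := by
      intro l₀ S₀
      rw [Multiset.filter_map, Multiset.map_map]
      show Multiset.map S₀ _ = _
      congr 1
    have h1 := congrArg (fun m => Multiset.map Prod.fst
      (Multiset.filter (fun p : ℕ × ℤ => p.2 = c) m)) hmult
    rw [e1 l S, e1 l' S'] at h1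
    exact h1
  -- equality of the sorted diagonal lists
  have hlist : ∀ c : ℤ, diagList N l S c = diagList N l' S' c := by
    intro c
    refine List.Perm.eq_of_pairwise' (diagList_sorted hl hl0 S hSr hSc c)
      (diagList_sorted hl' hl0' S' hSr' hSc' c) ?_
    rw [← Multiset.coe_eq_coe, diagList_coe hl hl0, diagList_coe hl' hl0']
    exact hdiagmult c
  have hcard : ∀ c : ℤ, (pdiag N l c).card = (pdiag N l' c).card := by
    intro c
    have := congrArg List.length (hlist c)
    simpa [diagList] using this
  constructor
  · intro i
    have hiff : ∀ k, k < l i ↔ k < l' i := by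
      intro k
      rw [box_iff hl hl0 i k, box_iff hl' hl0' i k, hcard]
    rcases lt_trichotomy (l i) (l' i) with h | h | h
    · exact absurd ((hiff (l i)).mpr h) (lt_irrefl _)
    · exact h
    · exact absurd ((hiff (l' i)).mp h) (lt_irrefl _)
  · intro i k hk
    set c : ℤ := (k : ℤ) - i with hc
    have ht : min i k < (pdiag N l c).card := (box_iff hl hl0 i k).mp hk
    have hfik : fdiag c (min i k) = (i, k) := fdiag_eq_self (b := (i, k)) rfl
    have := map_range_eq_apply (fun t => S (fdiag c t)) (fun t => S' (fdiag c t))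
      (hlist c) ht
    simpa [hfik] using this
end

section
/- Let n, m be integers with n ≥ 1. For positive integers x, x', y, y' with xy ≤ n, x'y' ≤ n, and m = y - x - y' + x' - 1, one has x - x' ≤ √(n + m²/4) - m/2 - 1. -/
/-- For integers `n ≥ 1` and positive integers `x, x', y, y'` with `x y ≤ n`,
`x' y' ≤ n` and `m = y - x - y' + x' - 1`, one has
`x - x' ≤ √(n + m²/4) - m/2 - 1`. -/
theorem stmt16 (n m x x' y y' : ℤ) (hn : 1 ≤ n) (hx : 1 ≤ x) (hx' : 1 ≤ x')
    (hy : 1 ≤ y) (hy' : 1 ≤ y') (h1 : x * y ≤ n) (h2 : x' * y' ≤ n)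
    (hm : m = y - x - y' + x' - 1) :
    (x : ℝ) - (x' : ℝ) ≤ Real.sqrt ((n : ℝ) + (m : ℝ) ^ 2 / 4) - (m : ℝ) / 2 - 1 := by
  have key : (x - x' + 1) * (y - y') ≤ n := by
    rcases le_or_gt (x - x' + 1) 0 with hA | hA
    · rcases le_or_gt (y - y') 0 with hB | hB
      · nlinarith
      · nlinarith
    · rcases le_or_gt (y - y') 0 with hB | hB
      · nlinarith
      · nlinarith
  have hS0 : 0 ≤ Real.sqrt ((n : ℝ) + (m : ℝ) ^ 2 / 4) := Real.sqrt_nonneg _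
  have hnR : (1:ℝ) ≤ (n:ℝ) := by exact_mod_cast hn
  have hS2 : Real.sqrt ((n : ℝ) + (m : ℝ) ^ 2 / 4) ^ 2 = (n : ℝ) + (m : ℝ) ^ 2 / 4 := by
    rw [Real.sq_sqrt]
    nlinarith [sq_nonneg ((m : ℝ))]
  have keyR : ((x : ℝ) - x' + 1) * ((y : ℝ) - y') ≤ (n : ℝ) := by exact_mod_cast key
  have hmR : (m : ℝ) = (y : ℝ) - x - y' + x' - 1 := by exact_mod_cast hm
  have goal : (x:ℝ) - x' + 1 + (m:ℝ)/2 ≤ Real.sqrt ((n : ℝ) + (m : ℝ) ^ 2 / 4) := by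
    rcases le_or_gt ((x:ℝ) - x' + 1 + (m:ℝ)/2) 0 with h | h
    · linarith
    · have hsq : ((x:ℝ) - x' + 1 + (m:ℝ)/2) ^ 2 ≤
          Real.sqrt ((n : ℝ) + (m : ℝ) ^ 2 / 4) ^ 2 := by
        rw [hS2, hmR]
        nlinarith [keyR, hmR]
      nlinarith [hsq, h, hS0]
  linarith
end

section
/- Let λ be a partition of m contained in an n-box budget and fix j ∈ ℤ with λ_j > 0. With c_j = λ_j - j the content of the last box of row j, one has ∑_{k=1}^{j}(λ_k - χ_k) ≥ |{b ∈ λ : ct(b) ≥ c_j}| - |{b ∈ χ : ct(b) ≥ c_j}| for any partition χ of m, where ct(b) = col(b) - row(b). In particular, the set of boxes of λ in the first j rows with content ≥ c_j equals the set of all boxes of λ with content ≥ c_j. -/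
open Finset

lemma count_aux (f : ℕ → ℕ) (N B : ℕ) (hf0 : ∀ i, N ≤ i → f i = 0)
    (hB : ∀ i, f i ≤ B) (c : ℤ) :
    {b : ℕ × ℕ | b.2 < f b.1 ∧ c ≤ (b.2 : ℤ) - b.1}.ncard
      = ∑ i ∈ range N, (f i - (c + i).toNat) := by
  have hset : {b : ℕ × ℕ | b.2 < f b.1 ∧ c ≤ (b.2 : ℤ) - b.1}
      = ↑((range N ×ˢ range B).filter
          (fun b => b.2 < f b.1 ∧ (c + b.1).toNat ≤ b.2)) := by
    ext ⟨i, k⟩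
    simp only [Set.mem_setOf_eq, coe_filter, mem_product, mem_range, Set.mem_setOf_eq]
    constructor
    · rintro ⟨h1, h2⟩
      have hiN : i < N := by
        by_contra h
        have := hf0 i (le_of_not_gt h)
        omega
      exact ⟨⟨hiN, lt_of_lt_of_le h1 (hB i)⟩, h1, by omega⟩
    · rintro ⟨_, h1, h2⟩
      exact ⟨h1, by omega⟩
  rw [hset, Set.ncard_coe_finset]
  rw [Finset.card_eq_sum_card_fiberwise (f := fun b => b.1) (t := range N)
      (fun b hb => (mem_product.mp (mem_filter.mp hb).1).1)]
  refine Finset.sum_congr rfl fun i hi => ?_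
  have heq : ((range N ×ˢ range B).filter
          (fun b => b.2 < f b.1 ∧ (c + b.1).toNat ≤ b.2)).filter (fun b => b.1 = i)
      = (Ico ((c + i).toNat) (f i)).map
          ⟨fun k => (i, k), fun a b h => by simpa using h⟩ := by
    ext ⟨a, b⟩
    simp only [mem_filter, mem_product, mem_range, mem_map, mem_Ico,
      Function.Embedding.coeFn_mk, Prod.mk.injEq]
    constructor
    · rintro ⟨⟨⟨hN, hBb⟩, h1, h2⟩, rfl⟩
      exact ⟨b, ⟨h2, h1⟩, rfl⟩
    · rintro ⟨k, ⟨hk1, hk2⟩, rfl, rfl⟩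
      exact ⟨⟨⟨mem_range.mp hi, lt_of_lt_of_le hk2 (hB i)⟩, hk2, hk1⟩, rfl⟩
  rw [heq, card_map, Nat.card_Ico]

/-- Let `λ, χ` be partitions of `m` (antitone functions `ℕ → ℕ` vanishing from row `N`
on, rows indexed from `0`) and fix a row `j` of `λ` with `λ_j > 0`.  With
`c_j = λ_j - j` the content of the last box of row `j` (in zero-indexed terms
`c = l j - j - 1`), one has
`∑_{k=1}^{j}(λ_k - χ_k) ≥ |{b ∈ λ : ct(b) ≥ c_j}| - |{b ∈ χ : ct(b) ≥ c_j}|`;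
in particular every box of `λ` with content `≥ c_j` lies in the first `j` rows. -/
theorem stmt19 (m : ℕ) (l x : ℕ → ℕ) (hl : Antitone l) (hx : Antitone x)
    (N : ℕ) (hl0 : ∀ i, N ≤ i → l i = 0) (hx0 : ∀ i, N ≤ i → x i = 0)
    (hlm : ∑ i ∈ range N, l i = m) (hxm : ∑ i ∈ range N, x i = m)
    (j : ℕ) (hj : 0 < l j) :
    (({b : ℕ × ℕ | b.2 < l b.1 ∧ (l j : ℤ) - j - 1 ≤ (b.2 : ℤ) - b.1}.ncard : ℤ)
        - ({b : ℕ × ℕ | b.2 < x b.1 ∧ (l j : ℤ) - j - 1 ≤ (b.2 : ℤ) - b.1}.ncard : ℤ)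
      ≤ ∑ k ∈ range (j + 1), ((l k : ℤ) - (x k : ℤ))) ∧
    (∀ i k : ℕ, k < l i → (l j : ℤ) - j - 1 ≤ (k : ℤ) - i → i ≤ j) := by
  have hjN : j < N := by
    by_contra h
    have := hl0 j (le_of_not_gt h)
    omega
  constructor
  · have h1 := count_aux l N (l 0) hl0 (fun i => hl (Nat.zero_le i))
      ((l j : ℤ) - j - 1)
    have h2 := count_aux x N (x 0) hx0 (fun i => hx (Nat.zero_le i))
      ((l j : ℤ) - j - 1)
    rw [h1, h2]
    push_cast
    have hA : ∑ i ∈ range N, ((l i - ((l j : ℤ) - j - 1 + i).toNat : ℕ) : ℤ)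
        = ∑ i ∈ range (j + 1),
            ((l i : ℤ) - (((l j : ℤ) - j - 1 + i).toNat : ℤ)) := by
      rw [← Finset.sum_subset (Finset.range_subset_range.mpr (by omega : j + 1 ≤ N))
        (fun i _ hni => ?_)]
      · refine Finset.sum_congr rfl fun i hi => ?_
        have hli : l j ≤ l i := hl (by simp only [mem_range] at hi; omega)
        have hle : (((l j : ℤ) - j - 1 + i).toNat : ℕ) ≤ l i := by
          simp only [mem_range] at hi
          omega
        push_cast [Nat.cast_sub hle]
        ring
      · have hni' : j + 1 ≤ i := by simpa [mem_range, not_lt] using hni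
        have hli : l i ≤ l j := hl (by omega)
        have : l i - ((l j : ℤ) - j - 1 + i).toNat = 0 := by omega
        simp [this]
    have hB : ∑ i ∈ range (j + 1),
          ((x i : ℤ) - (((l j : ℤ) - j - 1 + i).toNat : ℤ))
        ≤ ∑ i ∈ range N, ((x i - ((l j : ℤ) - j - 1 + i).toNat : ℕ) : ℤ) := by
      calc ∑ i ∈ range (j + 1),
            ((x i : ℤ) - (((l j : ℤ) - j - 1 + i).toNat : ℤ))
          ≤ ∑ i ∈ range (j + 1),
            ((x i - ((l j : ℤ) - j - 1 + i).toNat : ℕ) : ℤ) :=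
            Finset.sum_le_sum (fun i _ => by omega)
        _ ≤ ∑ i ∈ range N, ((x i - ((l j : ℤ) - j - 1 + i).toNat : ℕ) : ℤ) :=
            Finset.sum_le_sum_of_subset_of_nonneg
              (Finset.range_subset_range.mpr (by omega))
              (fun i _ _ => by positivity)
    rw [hA]
    have hfin : ∑ i ∈ range (j + 1),
          ((l i : ℤ) - (((l j : ℤ) - j - 1 + i).toNat : ℤ))
        - ∑ i ∈ range (j + 1),
          ((x i : ℤ) - (((l j : ℤ) - j - 1 + i).toNat : ℤ))
        = ∑ k ∈ range (j + 1), ((l k : ℤ) - (x k : ℤ)) := by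
      rw [Finset.sum_sub_distrib, Finset.sum_sub_distrib, Finset.sum_sub_distrib]
      ring
    linarith [hB]
  · intro i k hk hc
    by_contra h
    push_neg at h
    have hli : l i ≤ l j := hl (le_of_lt h)
    omega
end
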